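/- arXiv:2402.04134 — 5 statements merged into one kernel-verified Lean document; each statement's English description precedes it below -/
import Mathlib

section
/- Let k be an infinite field and A a ⟨σ⟩-Galois algebra over k of dimension r. Then there exist polynomials g, p ∈ k[t] with deg g = r and deg p ≤ r−1 such that the skew polynomial ring A[x,σ] is isomorphic as a k-algebra to k⟨A,X⟩/I, where k⟨A,X⟩ is the free (non-commutative) associative k-algebra on two generators A, X and I is the two-sided ideal generated by g(A) and X·A − p(A)·X. Concretely, one may take a primitive element a ∈ A with A = k[a], g the minimal polynomial of a over k, and p with p(a) = σ(a); the isomorphism sends a ↦ A and x ↦ X. -/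
/-!
Over an infinite field a finite étale algebra has a primitive element: a generic `a ∈ A`
separates the `[A : k]` algebra maps `A → k̄`, so its minimal polynomial `g` has degree `[A : k]`
and `A = k[a]`; write `σ a = p(a)` with `deg p < deg g`. In `k⟨A, X⟩ / (g(A), X A - p(A) X)` the
relation `X f(A) = f(p(A)) X` brings every element into the form `∑ fⱼ(A) Xʲ`. Its image
`∑ fⱼ(a) xʲ` in `A[x,σ]` sends `1` (in degree `0`) to the sequence `(fⱼ(a))ⱼ`, so it vanishes only
when `g ∣ fⱼ` for all `j`, i.e. when `∑ fⱼ(A) Xʲ = 0`.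
-/

open scoped TensorProduct

universe u v

structure IsGaloisAlgebra (k A : Type u) [Field k] [CommRing A] [Algebra k A]
    (σ : A ≃ₐ[k] A) : Prop where
  formallyEtale : Algebra.FormallyEtale k A
  finiteDimensional : FiniteDimensional k A
  fixed_iff : ∀ a : A, σ a = a ↔ a ∈ Set.range (algebraMap k A)
  orderOf_eq : orderOf σ = Module.finrank k A
  one_lt_finrank : 1 < Module.finrank k A


/-- The `k`-linear operator on `ℕ →₀ A` representing the skew monomial `a·xⁱ` in `A[x,σ]`:
it sends `single j b` to `single (j+i) (a * σ^i b)`.  (The skew polynomial ring acts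
faithfully on `ℕ →₀ A`, the module of coefficient sequences, by skewed multiplication.) -/
noncomputable def skewOp (k A : Type*) [Field k] [CommRing A] [Algebra k A]
    (σ : A ≃ₐ[k] A) (a : A) (i : ℕ) : Module.End k (ℕ →₀ A) :=
  (Finsupp.lmapDomain A k (· + i)) ∘ₗ
    (Finsupp.mapRange.linearMap (((Algebra.lmul k A) a) ∘ₗ ((σ ^ i : A ≃ₐ[k] A)).toLinearMap))

/-- The skew polynomial ring `A[x,σ]`, realized faithfully as the `k`-subalgebra of
`End_k (ℕ →₀ A)` generated by the operators of the skew monomials `a·xⁱ` (equivalently,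
the `k`-span of these operators, since `skewOp a i ∘ skewOp b j = skewOp (a·σⁱ(b)) (i+j)`). -/
noncomputable def SkewPolyAlg (k A : Type*) [Field k] [CommRing A] [Algebra k A]
    (σ : A ≃ₐ[k] A) : Subalgebra k (Module.End k (ℕ →₀ A)) :=
  Algebra.adjoin k (Set.range fun p : A × ℕ => skewOp k A σ p.1 p.2)

noncomputable instance (k A : Type*) [Field k] [CommRing A] [Algebra k A] (σ : A ≃ₐ[k] A) :
    Ring ↥(SkewPolyAlg k A σ) :=
  letI : Ring (Module.End k (ℕ →₀ A)) := inferInstance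
  inferInstance

/-- The element `x` of the skew polynomial ring `A[x,σ]`. -/
noncomputable def skewX (k A : Type*) [Field k] [CommRing A] [Algebra k A]
    (σ : A ≃ₐ[k] A) : ↥(SkewPolyAlg k A σ) :=
  ⟨skewOp k A σ 1 1, Algebra.subset_adjoin ⟨(1, 1), rfl⟩⟩

/-- The constant skew polynomial `a ∈ A`, as an element of `A[x,σ]`. -/
noncomputable def skewC (k A : Type*) [Field k] [CommRing A] [Algebra k A]
    (σ : A ≃ₐ[k] A) (a : A) : ↥(SkewPolyAlg k A σ) :=
  ⟨skewOp k A σ a 0, Algebra.subset_adjoin ⟨(a, 0), rfl⟩⟩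


/-- The relation on `k⟨X,A⟩` (free algebra on two generators, `X := ι 0`, `A := ι 1`)
generating the two-sided ideal `I = (g(A), X·A − p(A)·X)`. -/
inductive presRel (k : Type u) [Field k] (g p : Polynomial k) :
    FreeAlgebra k (Fin 2) → FreeAlgebra k (Fin 2) → Prop
  | gA : presRel k g p (Polynomial.aeval (FreeAlgebra.ι k (1 : Fin 2)) g) 0
  | XA : presRel k g p (FreeAlgebra.ι k (0 : Fin 2) * FreeAlgebra.ι k (1 : Fin 2))
      (Polynomial.aeval (FreeAlgebra.ι k (1 : Fin 2)) p * FreeAlgebra.ι k (0 : Fin 2))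

open Module Polynomial

section PrimitiveElement

theorem LinearMap.exists_injective_eval {k V W ι : Type*} [Field k] [Infinite k] [Finite ι]
    [AddCommGroup V] [Module k V] [AddCommGroup W] [Module k W] {f : ι → V →ₗ[k] W}
    (hf : Function.Injective f) : ∃ v, Function.Injective fun i ↦ f i v := by
  by_contra h
  simp only [not_exists, Function.not_injective_iff] at h
  have hcover : ⋃ ij : {ij : ι × ι // ij.1 ≠ ij.2},
      (LinearMap.ker (f ij.1.1 - f ij.1.2) : Set V) = Set.univ := by
    refine Set.eq_univ_of_forall fun v ↦ ?_
    obtain ⟨i, j, hij, hne⟩ := h v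
    exact Set.mem_iUnion.mpr ⟨⟨(i, j), hne⟩, by simp [hij]⟩
  obtain ⟨⟨⟨i, j⟩, hne⟩, htop⟩ := Subspace.exists_eq_top_of_iUnion_eq_univ hcover
  exact hne (hf (sub_eq_zero.mp (LinearMap.ker_eq_top.mp htop)))

variable {k A : Type*} [Field k] [CommRing A] [Algebra k A]

theorem finrank_le_natCard_algHom [FiniteDimensional k A] [Algebra.FormallyEtale k A]
    (K : Type*) [Field K] [IsAlgClosed K] [Algebra k K] :
    finrank k A ≤ Nat.card (A →ₐ[k] K) := by
  classical
  obtain ⟨I, _, B, _, _, e, _⟩ := (Algebra.FormallyEtale.iff_exists_algEquiv_prod k A).mp ‹_›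
  have := Fintype.ofFinite I
  have : ∀ i, FiniteDimensional k (B i) := fun i ↦
    .of_surjective ((LinearMap.proj i).comp e.toLinearMap)
      ((Function.surjective_eval i).comp e.surjective)
  let restrict (χ : Σ i, B i →ₐ[k] K) : A →ₐ[k] K :=
    (χ.2.comp (Pi.evalAlgHom k B χ.1)).comp e.toAlgHom
  have hrestrict : Function.Injective restrict := by
    rintro ⟨i, χ⟩ ⟨j, ψ⟩ h
    have h' : χ.comp (Pi.evalAlgHom k B i) = ψ.comp (Pi.evalAlgHom k B j) :=
      (AlgHom.cancel_right e.surjective).mp h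
    obtain rfl : i = j := by
      by_contra hij
      simpa [hij] using congr($h' (Pi.single i 1))
    obtain rfl : χ = ψ := (AlgHom.cancel_right (Function.surjective_eval i)).mp h'
    rfl
  calc finrank k A = ∑ i, finrank k (B i) := by
        rw [e.toLinearEquiv.finrank_eq, Module.finrank_pi_fintype]
    _ = ∑ i, Nat.card (B i →ₐ[k] K) := by
        simp_rw [AlgHom.natCard_of_splits k _ K fun _ ↦ IsAlgClosed.splits _]
    _ = Nat.card (Σ i, B i →ₐ[k] K) := by simp
    _ ≤ Nat.card (A →ₐ[k] K) := Nat.card_le_card_of_injective restrict hrestrict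

theorem natCard_algHom_le_natDegree_minpoly {K : Type*} [Field K] [Algebra k K] {a : A}
    (ha : IsIntegral k a) (hsep : Function.Injective fun χ : A →ₐ[k] K ↦ χ a) :
    Nat.card (A →ₐ[k] K) ≤ (minpoly k a).natDegree := by
  have hroot (χ : A →ₐ[k] K) : χ a ∈ (minpoly k a).rootSet K :=
    (mem_rootSet_of_ne (minpoly.ne_zero ha)).mpr <| by
      rw [aeval_algHom_apply, minpoly.aeval, map_zero]
  calc Nat.card (A →ₐ[k] K) ≤ Nat.card ((minpoly k a).rootSet K) :=
        Nat.card_le_card_of_injective (fun χ ↦ ⟨χ a, hroot χ⟩) fun χ ψ h ↦ hsep congr($h.1)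
    _ ≤ (minpoly k a).natDegree := by
        rw [Nat.card_coe_set_eq]
        exact ncard_rootSet_le _ K

theorem adjoin_singleton_eq_top_of_finrank_le [FiniteDimensional k A] {a : A}
    (h : finrank k A ≤ (minpoly k a).natDegree) : Algebra.adjoin k {a} = ⊤ := by
  have hdim : finrank k (Algebra.adjoin k {a}) = finrank k A :=
    ((Algebra.adjoin.powerBasis (Algebra.IsIntegral.isIntegral a)).finrank.trans
      (by simp)).trans (le_antisymm (minpoly.natDegree_le a) h)
  exact Algebra.toSubmodule_eq_top.1 (Submodule.eq_top_of_finrank_eq hdim)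

theorem exists_adjoin_singleton_eq_top [Infinite k] [FiniteDimensional k A]
    [Algebra.FormallyEtale k A] :
    ∃ a : A, Algebra.adjoin k {a} = ⊤ ∧ (minpoly k a).natDegree = finrank k A := by
  let K := AlgebraicClosure k
  obtain ⟨a, ha⟩ := LinearMap.exists_injective_eval
    (f := fun χ : A →ₐ[k] K ↦ χ.toLinearMap) fun χ ψ h ↦ AlgHom.toLinearMap_injective h
  have hle : finrank k A ≤ (minpoly k a).natDegree :=
    (finrank_le_natCard_algHom K).trans
      (natCard_algHom_le_natDegree_minpoly (Algebra.IsIntegral.isIntegral a) ha)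
  exact ⟨a, adjoin_singleton_eq_top_of_finrank_le hle, le_antisymm (minpoly.natDegree_le a) hle⟩

end PrimitiveElement

section SkewPolyAlg

variable (k A : Type*) [Field k] [CommRing A] [Algebra k A] (σ : A ≃ₐ[k] A)

theorem skewOp_single (a : A) (i n : ℕ) (c : A) :
    skewOp k A σ a i (Finsupp.single n c) = Finsupp.single (n + i) (a * (σ ^ i) c) := by
  simp only [skewOp, LinearMap.comp_apply, Finsupp.mapRange.linearMap_apply,
    Finsupp.mapRange_single, Finsupp.lmapDomain_apply, Finsupp.mapDomain_single,
    AlgEquiv.toLinearMap_apply, Algebra.coe_lmul_eq_mul, LinearMap.mul_apply']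

theorem skewOp_mul (a b : A) (i j : ℕ) :
    skewOp k A σ a i * skewOp k A σ b j = skewOp k A σ (a * (σ ^ i) b) (i + j) :=
  Finsupp.lhom_ext fun n c ↦ by
    simp only [Module.End.mul_apply, skewOp_single, map_mul, pow_add, AlgEquiv.mul_apply]
    ring_nf

noncomputable def skewCHom : A →ₐ[k] SkewPolyAlg k A σ where
  toFun := skewC k A σ
  map_one' := Subtype.ext <| Finsupp.lhom_ext fun n c ↦ by simp [skewC, skewOp_single]
  map_mul' a b := Subtype.ext <| by simp [skewC, skewOp_mul]
  map_zero' := Subtype.ext <| Finsupp.lhom_ext fun n c ↦ by simp [skewC, skewOp_single]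
  map_add' a b := Subtype.ext <| Finsupp.lhom_ext fun n c ↦ by simp [skewC, skewOp_single, add_mul]
  commutes' r := Subtype.ext <| Finsupp.lhom_ext fun n c ↦ by
    simp [skewC, skewOp_single, Algebra.smul_def]

theorem coe_skewX_pow (i : ℕ) : ((skewX k A σ ^ i : SkewPolyAlg k A σ) : Module.End k (ℕ →₀ A)) =
    skewOp k A σ 1 i := by
  induction i with
  | zero => exact (congr_arg Subtype.val (map_one (skewCHom k A σ))).symm
  | succ i ih =>
    rw [pow_succ, MulMemClass.coe_mul, ih]
    simp [skewX, skewOp_mul]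

theorem coe_skewCHom_mul_skewX_pow (b : A) (i : ℕ) :
    ((skewCHom k A σ b * skewX k A σ ^ i : SkewPolyAlg k A σ) : Module.End k (ℕ →₀ A)) =
      skewOp k A σ b i := by
  rw [MulMemClass.coe_mul, coe_skewX_pow]
  simp [skewCHom, skewC, skewOp_mul]

theorem skewX_mul_skewCHom (b : A) :
    skewX k A σ * skewCHom k A σ b = skewCHom k A σ (σ b) * skewX k A σ :=
  Subtype.ext <| by simp [skewX, skewCHom, skewC, skewOp_mul]

end SkewPolyAlg

theorem SemiconjBy.aeval {R S : Type*} [CommSemiring R] [Semiring S] [Algebra R S] {x y z : S}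
    (h : SemiconjBy x y z) (q : R[X]) : SemiconjBy x (aeval y q) (aeval z q) := by
  induction q using Polynomial.induction_on' with
  | add f g hf hg => simpa only [map_add] using hf.add_right hg
  | monomial n c =>
    simp only [aeval_monomial]
    exact SemiconjBy.mul_right (Algebra.commutes c x).symm (h.pow_right n)

section Presentation

variable (k : Type u) [Field k] (g p : k[X])

noncomputable def presA : RingQuot (presRel k g p) :=
  RingQuot.mkAlgHom k (presRel k g p) (FreeAlgebra.ι k 1)

noncomputable def presX : RingQuot (presRel k g p) :=
  RingQuot.mkAlgHom k (presRel k g p) (FreeAlgebra.ι k 0)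

theorem aeval_presA_self : aeval (presA k g p) g = 0 := by
  rw [presA, aeval_algHom_apply, RingQuot.mkAlgHom_rel k presRel.gA, map_zero]

theorem presX_mul_aeval_presA (q : k[X]) :
    presX k g p * aeval (presA k g p) q = aeval (presA k g p) (q.comp p) * presX k g p := by
  rw [aeval_comp]
  refine SemiconjBy.aeval ?_ q
  have h := RingQuot.mkAlgHom_rel k (presRel.XA (k := k) (g := g) (p := p))
  rw [map_mul, map_mul, ← aeval_algHom_apply] at h
  exact h

theorem presX_pow_mul_aeval_presA (j : ℕ) (q : k[X]) :
    presX k g p ^ j * aeval (presA k g p) q =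
      aeval (presA k g p) ((·.comp p)^[j] q) * presX k g p ^ j := by
  induction j generalizing q with
  | zero => simp
  | succ j ih =>
    rw [pow_succ, mul_assoc, presX_mul_aeval_presA, ← mul_assoc, ih, mul_assoc,
      Function.iterate_succ_apply]

noncomputable def presOfCoeffs : (ℕ →₀ k[X]) →ₗ[k] RingQuot (presRel k g p) :=
  Finsupp.lsum k fun j ↦
    (LinearMap.mulRight k (presX k g p ^ j)).comp (aeval (presA k g p)).toLinearMap

theorem presOfCoeffs_single (j : ℕ) (f : k[X]) :
    presOfCoeffs k g p (Finsupp.single j f) = aeval (presA k g p) f * presX k g p ^ j := by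
  simp [presOfCoeffs]

theorem presOfCoeffs_eq_zero_of_dvd (y : ℕ →₀ k[X]) (hy : ∀ j, g ∣ y j) :
    presOfCoeffs k g p y = 0 := by
  rw [presOfCoeffs, Finsupp.lsum_apply]
  refine Finset.sum_eq_zero fun j _ ↦ ?_
  obtain ⟨q, hq⟩ := hy j
  simp [hq, aeval_presA_self]

theorem presOfCoeffs_single_mul_single (j l : ℕ) (f h : k[X]) :
    presOfCoeffs k g p (Finsupp.single j f) * presOfCoeffs k g p (Finsupp.single l h) =
      presOfCoeffs k g p (Finsupp.single (j + l) (f * (·.comp p)^[j] h)) := by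
  simp only [presOfCoeffs_single, map_mul, pow_add]
  rw [mul_assoc, ← mul_assoc (presX k g p ^ j), presX_pow_mul_aeval_presA]
  noncomm_ring

theorem presOfCoeffs_mul_mem_range (y y' : ℕ →₀ k[X]) :
    presOfCoeffs k g p y * presOfCoeffs k g p y' ∈ LinearMap.range (presOfCoeffs k g p) := by
  induction y using Finsupp.induction_linear with
  | zero => simp
  | add y₁ y₂ h₁ h₂ => simpa only [map_add, add_mul] using add_mem h₁ h₂
  | single j f =>
    induction y' using Finsupp.induction_linear with
    | zero => simp
    | add y₁ y₂ h₁ h₂ => simpa only [map_add, mul_add] using add_mem h₁ h₂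
    | single l h => exact ⟨_, (presOfCoeffs_single_mul_single k g p j l f h).symm⟩

theorem presOfCoeffs_surjective : Function.Surjective (presOfCoeffs k g p) := by
  intro x
  obtain ⟨w, rfl⟩ := RingQuot.mkAlgHom_surjective k (presRel k g p) x
  change _ ∈ LinearMap.range _
  induction w using FreeAlgebra.induction with
  | grade0 c =>
    exact ⟨Finsupp.single 0 (C c), by simp [presOfCoeffs_single]⟩
  | grade1 i =>
    fin_cases i
    · exact ⟨Finsupp.single 1 1, by simp [presOfCoeffs_single, presX]⟩
    · exact ⟨Finsupp.single 0 X, by simp [presOfCoeffs_single, presA]⟩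
  | mul w₁ w₂ h₁ h₂ =>
    obtain ⟨y₁, hy₁⟩ := h₁
    obtain ⟨y₂, hy₂⟩ := h₂
    rw [map_mul, ← hy₁, ← hy₂]
    exact presOfCoeffs_mul_mem_range k g p y₁ y₂
  | add w₁ w₂ h₁ h₂ => simpa only [map_add] using add_mem h₁ h₂

end Presentation

section SkewPolyPresentation

variable {k A : Type u} [Field k] [CommRing A] [Algebra k A] (σ : A ≃ₐ[k] A) (a : A) (p : k[X])

noncomputable def presToSkewPoly (hp : aeval a p = σ a) :
    RingQuot (presRel k (minpoly k a) p) →ₐ[k] SkewPolyAlg k A σ :=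
  RingQuot.liftAlgHom k ⟨FreeAlgebra.lift k ![skewX k A σ, skewCHom k A σ a], by
    rintro _ _ (_ | _)
    · simp [← aeval_algHom_apply]
    · simp only [map_mul, ← aeval_algHom_apply, FreeAlgebra.lift_ι_apply, Matrix.cons_val_zero,
        Matrix.cons_val_one]
      rw [aeval_algHom_apply, hp, skewX_mul_skewCHom]⟩

variable {σ a p} (hp : aeval a p = σ a)

theorem presToSkewPoly_presA : presToSkewPoly σ a p hp (presA k _ p) = skewCHom k A σ a := by
  simp [presToSkewPoly, presA]

theorem presToSkewPoly_presX : presToSkewPoly σ a p hp (presX k _ p) = skewX k A σ := by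
  simp [presToSkewPoly, presX]

theorem coe_presToSkewPoly_presOfCoeffs_single (j : ℕ) (f : k[X]) :
    (presToSkewPoly σ a p hp (presOfCoeffs k _ p (Finsupp.single j f)) :
      Module.End k (ℕ →₀ A)) = skewOp k A σ (aeval a f) j := by
  rw [presOfCoeffs_single, map_mul, map_pow, ← aeval_algHom_apply, presToSkewPoly_presA,
    presToSkewPoly_presX, aeval_algHom_apply, coe_skewCHom_mul_skewX_pow]

theorem presToSkewPoly_presOfCoeffs_apply_single_zero_one (y : ℕ →₀ k[X]) :
    (presToSkewPoly σ a p hp (presOfCoeffs k _ p y) : Module.End k (ℕ →₀ A))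
      (Finsupp.single 0 1) = Finsupp.mapRange (aeval a) (map_zero _) y := by
  induction y using Finsupp.induction_linear with
  | zero => simp
  | add y₁ y₂ h₁ h₂ => simp [h₁, h₂, Finsupp.mapRange_add]
  | single j f => simp [coe_presToSkewPoly_presOfCoeffs_single, skewOp_single]

theorem presToSkewPoly_injective : Function.Injective (presToSkewPoly σ a p hp) := by
  refine (injective_iff_map_eq_zero _).mpr fun x hx ↦ ?_
  obtain ⟨y, rfl⟩ := presOfCoeffs_surjective k _ p x
  have hy := presToSkewPoly_presOfCoeffs_apply_single_zero_one hp y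
  rw [hx] at hy
  refine presOfCoeffs_eq_zero_of_dvd k _ p y fun j ↦ minpoly.dvd k a ?_
  simpa using congr($hy j).symm

theorem presToSkewPoly_surjective (htop : Algebra.adjoin k {a} = ⊤) :
    Function.Surjective (presToSkewPoly σ a p hp) := by
  suffices h : SkewPolyAlg k A σ ≤ (presToSkewPoly σ a p hp).range.map (SkewPolyAlg k A σ).val by
    intro s
    obtain ⟨_, ⟨t, rfl⟩, ht⟩ := h s.2
    exact ⟨t, Subtype.ext ht⟩
  refine Algebra.adjoin_le ?_
  rintro _ ⟨⟨b, i⟩, rfl⟩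
  obtain ⟨f, rfl⟩ : b ∈ (aeval a : k[X] →ₐ[k] A).range := by
    rw [← Algebra.adjoin_singleton_eq_range_aeval, htop]; trivial
  exact ⟨_, ⟨presOfCoeffs k _ p (Finsupp.single i f), rfl⟩,
    coe_presToSkewPoly_presOfCoeffs_single hp i f⟩

end SkewPolyPresentation

theorem skewPoly_presentation (k A : Type u) [Field k] [Infinite k] [CommRing A]
    [Algebra k A] (σ : A ≃ₐ[k] A) (hGal : IsGaloisAlgebra k A σ) :
    ∃ (a : A) (g p : Polynomial k),
      Algebra.adjoin k {a} = (⊤ : Subalgebra k A) ∧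
      g = minpoly k a ∧
      g.natDegree = Module.finrank k A ∧
      p.natDegree ≤ Module.finrank k A - 1 ∧
      Polynomial.aeval a p = σ a ∧
      ∃ φ : ↥(SkewPolyAlg k A σ) ≃ₐ[k] RingQuot (presRel k g p),
        φ (skewC k A σ a) = RingQuot.mkAlgHom k (presRel k g p) (FreeAlgebra.ι k (1 : Fin 2)) ∧
        φ (skewX k A σ) = RingQuot.mkAlgHom k (presRel k g p) (FreeAlgebra.ι k (0 : Fin 2)) := by
  have := hGal.finiteDimensional
  have := hGal.formallyEtale
  obtain ⟨a, htop, hdeg⟩ := exists_adjoin_singleton_eq_top (k := k) (A := A)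
  obtain ⟨q, hq⟩ : σ a ∈ (aeval a : k[X] →ₐ[k] A).range := by
    rw [← Algebra.adjoin_singleton_eq_range_aeval, htop]; trivial
  have hmonic := minpoly.monic (Algebra.IsIntegral.isIntegral (R := k) a)
  have hp : aeval a (q %ₘ minpoly k a) = σ a := by
    rw [aeval_modByMonic_eq_self_of_root (minpoly.aeval k a)]; exact hq
  have hg_ne_one : minpoly k a ≠ 1 := fun h ↦ by
    have := hGal.one_lt_finrank
    rw [← hdeg, h, natDegree_one] at this
    omega
  have hpdeg := natDegree_modByMonic_lt q hmonic hg_ne_one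
  let ψ := presToSkewPoly σ a _ hp
  refine ⟨a, _, _, htop, rfl, hdeg, by omega, hp,
    (AlgEquiv.ofBijective ψ ⟨presToSkewPoly_injective hp, presToSkewPoly_surjective hp htop⟩).symm,
    ?_, ?_⟩
  · exact (AlgEquiv.symm_apply_eq _).mpr (presToSkewPoly_presA hp).symm
  · exact (AlgEquiv.symm_apply_eq _).mpr (presToSkewPoly_presX hp).symm
end

section
/- Let k be an infinite field with exponent of matrix multiplication ω = ω(k). For every ε > 0 there exists a constant C > 0 such that for every ⟨σ⟩-Galois algebra A over k of dimension r and every positive integer d < r, the A-bilinear rank of the scalar extension μ_d^A of μ_d satisfies rank_A(μ_d^A) ≤ C · d^{ω−1+ε} · r. -/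
open scoped TensorProduct

universe u v



noncomputable def BilinearRank {R U V W : Type*} [CommSemiring R]
    [AddCommMonoid U] [Module R U] [AddCommMonoid V] [Module R V]
    [AddCommMonoid W] [Module R W] (f : U →ₗ[R] V →ₗ[R] W) : ℕ :=
  sInf {n : ℕ | ∃ (α : Fin n → (U →ₗ[R] R)) (β : Fin n → (V →ₗ[R] R)) (w : Fin n → W),
    ∀ u v, f u v = ∑ j, α j u • β j v • w j}

noncomputable def matMulBil (R : Type*) [CommSemiring R] (e h l : ℕ) :
    Matrix (Fin e) (Fin h) R →ₗ[R] Matrix (Fin h) (Fin l) R →ₗ[R] Matrix (Fin e) (Fin l) R :=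
  LinearMap.mk₂ R (fun P Q => P * Q)
    (by intros; exact Matrix.add_mul ..)
    (by intros; exact Matrix.smul_mul ..)
    (by intros; exact Matrix.mul_add ..)
    (by intros; exact Matrix.mul_smul ..)

noncomputable def mmExponent (R : Type*) [CommSemiring R] : ℝ :=
  sInf {τ : ℝ | ∃ C : ℝ, 0 < C ∧ ∀ n : ℕ, 1 ≤ n →
    (BilinearRank (matMulBil R n n n) : ℝ) ≤ C * (n : ℝ) ^ τ}


noncomputable def skewMulBaseMap (k A : Type u) [Field k] [CommRing A] [Algebra k A]
    (σ : A ≃ₐ[k] A) (d : ℕ) :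
    (Fin (d + 1) → (A ⊗[k] A)) →ₗ[A] (Fin (d + 1) → (A ⊗[k] A)) →ₗ[A]
      (Fin (2 * d + 1) → (A ⊗[k] A)) :=
  LinearMap.mk₂ A
    (fun f g n => ∑ i : Fin (d + 1), ∑ j : Fin (d + 1),
      if (i : ℕ) + (j : ℕ) = (n : ℕ) then
        f i * (Algebra.TensorProduct.map (AlgHom.id A A) ((σ ^ (i : ℕ)).toAlgHom)) (g j)
      else 0)
    (by
      intro f f' g
      funext n
      simp only [Pi.add_apply]
      rw [← Finset.sum_add_distrib]
      refine Finset.sum_congr rfl fun i _ => ?_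
      rw [← Finset.sum_add_distrib]
      refine Finset.sum_congr rfl fun j _ => ?_
      split
      · rw [add_mul]
      · rw [add_zero])
    (by
      intro c f g
      funext n
      simp only [Pi.smul_apply]
      rw [Finset.smul_sum]
      refine Finset.sum_congr rfl fun i _ => ?_
      rw [Finset.smul_sum]
      refine Finset.sum_congr rfl fun j _ => ?_
      split
      · rw [smul_mul_assoc]
      · rw [smul_zero])
    (by
      intro f g g'
      funext n
      simp only [Pi.add_apply]
      rw [← Finset.sum_add_distrib]
      refine Finset.sum_congr rfl fun i _ => ?_
      rw [← Finset.sum_add_distrib]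
      refine Finset.sum_congr rfl fun j _ => ?_
      split
      · rw [map_add, mul_add]
      · rw [add_zero])
    (by
      intro c f g
      funext n
      simp only [Pi.smul_apply]
      rw [Finset.smul_sum]
      refine Finset.sum_congr rfl fun i _ => ?_
      rw [Finset.smul_sum]
      refine Finset.sum_congr rfl fun j _ => ?_
      split
      · rw [map_smul, mul_smul_comm]
      · rw [smul_zero])


/-!
The maps `φ_c : a ⊗ b ↦ a * σ^c b` (`0 ≤ c < r`) identify `A ⊗[k] A` with `A^r` as `A`-modules:
`φ_c` sends the separability idempotent of `A/k` to a `σ`-invariant idempotent, hence to `0` or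
`1`, and to `1` exactly when `σ^c = 1`. Through this splitting the `c`-th component of the
`n`-th coefficient of a product of skew polynomials is `∑_{i+j=n} φ_c(f_i) φ_{c+i}(g_j)`; for `d`
consecutive values of `c` these are entries of one product of banded `3d × 3d` matrices over `A`.
Hence `r / d + 1` matrix products of size `3d` compute `μ_d^A`, and a decomposition of `⟨3d,3d,3d⟩`
over `k` of length `C (3d)^τ` stays one over `A`, which gives the bound `2 C 3^τ d^(τ-1) r`.
-/

section BilinearDecomp

variable {R U V W W' : Type*} [CommSemiring R]
  [AddCommMonoid U] [Module R U] [AddCommMonoid V] [Module R V]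
  [AddCommMonoid W] [Module R W] [AddCommMonoid W'] [Module R W']

def HasBilinearDecomp (f : U →ₗ[R] V →ₗ[R] W) (n : ℕ) : Prop :=
  ∃ (α : Fin n → (U →ₗ[R] R)) (β : Fin n → (V →ₗ[R] R)) (w : Fin n → W),
    ∀ u v, f u v = ∑ j, α j u • β j v • w j

namespace HasBilinearDecomp

variable {f g : U →ₗ[R] V →ₗ[R] W} {m n : ℕ}

theorem bilinearRank_le (h : HasBilinearDecomp f n) : BilinearRank f ≤ n :=
  Nat.sInf_le h

theorem of_bilinearRank (h : HasBilinearDecomp f n) : HasBilinearDecomp f (BilinearRank f) :=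
  Nat.sInf_mem (s := {n | HasBilinearDecomp f n}) ⟨n, h⟩

theorem of_fintype {ι : Type*} [Fintype ι] (α : ι → (U →ₗ[R] R)) (β : ι → (V →ₗ[R] R))
    (w : ι → W) (h : ∀ u v, f u v = ∑ j, α j u • β j v • w j) :
    HasBilinearDecomp f (Fintype.card ι) := by
  let e := (Fintype.equivFin ι).symm
  exact ⟨α ∘ e, β ∘ e, w ∘ e, fun u v => by rw [h, ← e.sum_comp]; rfl⟩

theorem zero : HasBilinearDecomp (0 : U →ₗ[R] V →ₗ[R] W) 0 :=
  ⟨Fin.elim0, Fin.elim0, Fin.elim0, fun _ _ => by simp⟩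

theorem add (hf : HasBilinearDecomp f m) (hg : HasBilinearDecomp g n) :
    HasBilinearDecomp (f + g) (m + n) := by
  obtain ⟨α, β, w, hfw⟩ := hf
  obtain ⟨α', β', w', hgw⟩ := hg
  refine ⟨Fin.append α α', Fin.append β β', Fin.append w w', fun u v => ?_⟩
  simp [Fin.sum_univ_add, hfw, hgw]

theorem finset_sum {ι : Type*} (s : Finset ι) {f : ι → U →ₗ[R] V →ₗ[R] W} {n : ι → ℕ}
    (h : ∀ i ∈ s, HasBilinearDecomp (f i) (n i)) :
    HasBilinearDecomp (∑ i ∈ s, f i) (∑ i ∈ s, n i) := by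
  classical
  induction s using Finset.induction_on with
  | empty => exact zero
  | insert i s hi ih =>
    rw [Finset.sum_insert hi, Finset.sum_insert hi]
    exact (h i (s.mem_insert_self i)).add (ih fun j hj => h j (Finset.mem_insert_of_mem hj))

theorem compr₂ (h : HasBilinearDecomp f n) (L : W →ₗ[R] W') :
    HasBilinearDecomp (f.compr₂ L) n := by
  obtain ⟨α, β, w, hw⟩ := h
  exact ⟨α, β, fun j => L (w j), fun u v => by simp [hw]⟩

theorem compl₁₂ {U' V' : Type*} [AddCommMonoid U'] [Module R U'] [AddCommMonoid V'] [Module R V']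
    (h : HasBilinearDecomp f n) (P : U' →ₗ[R] U) (Q : V' →ₗ[R] V) :
    HasBilinearDecomp (f.compl₁₂ P Q) n := by
  obtain ⟨α, β, w, hw⟩ := h
  exact ⟨fun j => α j ∘ₗ P, fun j => β j ∘ₗ Q, w, fun u v => by simp [hw]⟩

theorem of_compr₂_equiv (e : W ≃ₗ[R] W') (h : HasBilinearDecomp (f.compr₂ e.toLinearMap) n) :
    HasBilinearDecomp f n := by
  convert h.compr₂ e.symm.toLinearMap
  ext u v
  simp

end HasBilinearDecomp

end BilinearDecomp

theorem hasBilinearDecomp_matMulBil (R : Type*) [CommSemiring R] (e h l : ℕ) :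
    HasBilinearDecomp (matMulBil R e h l) (e * h * l) := by
  classical
  have := HasBilinearDecomp.of_fintype (f := matMulBil R e h l)
    (fun p : Fin e × Fin h × Fin l => Matrix.entryLinearMap R R p.1 p.2.1)
    (fun p => Matrix.entryLinearMap R R p.2.1 p.2.2) (fun p => Matrix.single p.1 p.2.2 1)
    fun P Q => by
      ext s u
      simp [matMulBil, Matrix.mul_apply, Matrix.sum_apply, Fintype.sum_prod_type,
        Matrix.single_apply, ite_and]
  simpa [mul_assoc] using this

theorem HasBilinearDecomp.matMulBil_baseChange {k A : Type*} [CommSemiring k] [CommSemiring A]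
    [Algebra k A] {e h l n : ℕ} (hk : HasBilinearDecomp (matMulBil k e h l) n) :
    HasBilinearDecomp (matMulBil A e h l) n := by
  classical
  obtain ⟨α, β, w, hw⟩ := hk
  let lift {m p : ℕ} (γ : Matrix (Fin m) (Fin p) k →ₗ[k] k) : Matrix (Fin m) (Fin p) A →ₗ[A] A :=
    (Matrix.stdBasis A _ _).constr A fun q => algebraMap k A (γ (Matrix.stdBasis k _ _ q))
  refine ⟨fun j => lift (α j), fun j => lift (β j), fun j => (w j).map (algebraMap k A),
    fun P Q => ?_⟩
  suffices matMulBil A e h l =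
      ∑ j, (lift (α j)).smulRight ((lift (β j)).smulRight ((w j).map (algebraMap k A))) by
    simp [this]
  refine LinearMap.ext_basis (Matrix.stdBasis A _ _) (Matrix.stdBasis A _ _) fun p q => ?_
  have hstd {m p : ℕ} (i : Fin m × Fin p) :
      Matrix.stdBasis A _ _ i = (Matrix.stdBasis k _ _ i).map (algebraMap k A) := by
    obtain ⟨a, b⟩ := i
    simp [Matrix.stdBasis_eq_single, Matrix.map_single]
  have hpq := congrArg (Matrix.map · (algebraMap k A))
    (hw (Matrix.stdBasis k _ _ p) (Matrix.stdBasis k _ _ q))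
  simp only [matMulBil, LinearMap.mk₂_apply, Matrix.map_mul (f := algebraMap k A), ← hstd] at hpq
  simp only [matMulBil, LinearMap.mk₂_apply, LinearMap.sum_apply, LinearMap.smulRight_apply,
    lift, Module.Basis.constr_basis, hpq]
  ext i j
  simp [Matrix.sum_apply, Algebra.smul_def]

theorem exists_bilinearRank_matMulBil_le_rpow (R : Type*) [CommSemiring R] {ε : ℝ} (hε : 0 < ε) :
    ∃ τ C : ℝ, τ < mmExponent R + ε ∧ 0 < C ∧
      ∀ n : ℕ, 1 ≤ n → (BilinearRank (matMulBil R n n n) : ℝ) ≤ C * (n : ℝ) ^ τ := by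
  have cube : ∀ n : ℕ, 1 ≤ n → (BilinearRank (matMulBil R n n n) : ℝ) ≤ 1 * (n : ℝ) ^ (3 : ℝ) :=
    fun n _ => by
      rw [one_mul, Real.rpow_ofNat]
      exact_mod_cast ((hasBilinearDecomp_matMulBil R n n n).bilinearRank_le).trans_eq (by ring)
  obtain ⟨τ, ⟨C, hC, hτ⟩, hlt⟩ :=
    exists_lt_of_csInf_lt (s := {τ : ℝ | ∃ C : ℝ, 0 < C ∧ ∀ n : ℕ, 1 ≤ n →
      (BilinearRank (matMulBil R n n n) : ℝ) ≤ C * (n : ℝ) ^ τ})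
      ⟨3, 1, one_pos, cube⟩ (lt_add_of_pos_right (mmExponent R) hε)
  exact ⟨τ, C, hlt, hC, hτ⟩

section TwistedLmul

variable {k A : Type*} [CommRing k] [CommRing A] [Algebra k A]

noncomputable def twistedLmul (τ : A ≃ₐ[k] A) : A ⊗[k] A →ₐ[A] A :=
  Algebra.TensorProduct.lift (AlgHom.id A A) τ.toAlgHom fun _ _ => Commute.all _ _

@[simp]
theorem twistedLmul_tmul (τ : A ≃ₐ[k] A) (a b : A) : twistedLmul τ (a ⊗ₜ[k] b) = a * τ b := by
  simp [twistedLmul]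

theorem twistedLmul_one :
    (twistedLmul (1 : A ≃ₐ[k] A)).restrictScalars k = Algebra.TensorProduct.lmul' k :=
  Algebra.TensorProduct.ext' fun a b => by simp

theorem twistedLmul_map (τ ρ : A ≃ₐ[k] A) (x : A ⊗[k] A) :
    twistedLmul τ (Algebra.TensorProduct.map (AlgHom.id A A) ρ.toAlgHom x) =
      twistedLmul (τ * ρ) x := by
  change ((twistedLmul τ).comp (Algebra.TensorProduct.map (AlgHom.id A A) ρ.toAlgHom)) x = _
  congr 1
  exact Algebra.TensorProduct.ext' fun a b => by simp

theorem twistedLmul_map_map {τ ρ : A ≃ₐ[k] A} (h : Commute τ ρ) (x : A ⊗[k] A) :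
    twistedLmul τ (Algebra.TensorProduct.map ρ.toAlgHom ρ.toAlgHom x) = ρ (twistedLmul τ x) := by
  induction x with
  | zero => simp
  | tmul a b => simp [← AlgEquiv.mul_apply, h.eq]
  | add x y hx hy => simp only [map_add, hx, hy]

end TwistedLmul

namespace Algebra.FormallyUnramified

open Algebra.TensorProduct

variable {k A : Type*} [CommRing k] [CommRing A] [Algebra k A]

theorem mul_eq_lmul'_tmul_one_mul {t : A ⊗[k] A}
    (ht : ∀ s : A, (1 ⊗ₜ[k] s) * t = (s ⊗ₜ[k] 1) * t) (z : A ⊗[k] A) :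
    z * t = (lmul' k z ⊗ₜ[k] 1) * t := by
  induction z with
  | zero => simp
  | tmul a b =>
    calc (a ⊗ₜ[k] b) * t = (a ⊗ₜ[k] 1) * ((1 ⊗ₜ[k] b) * t) := by
          rw [← mul_assoc, tmul_mul_tmul, mul_one, one_mul]
      _ = (a ⊗ₜ[k] 1) * ((b ⊗ₜ[k] 1) * t) := by rw [ht]
      _ = (lmul' k (a ⊗ₜ[k] b) ⊗ₜ[k] 1) * t := by
          rw [← mul_assoc, tmul_mul_tmul, mul_one, lmul'_apply_tmul]
  | add x y hx hy => rw [add_mul, hx, hy, map_add, TensorProduct.add_tmul, add_mul]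

variable [FormallyUnramified k A] [EssFiniteType k A]

theorem eq_elem_of {t : A ⊗[k] A} (ht : ∀ s : A, (1 ⊗ₜ[k] s) * t = (s ⊗ₜ[k] 1) * t)
    (ht' : lmul' k t = 1) : t = elem k A :=
  calc t = (lmul' k (elem k A) ⊗ₜ[k] 1) * t := by rw [lmul_elem, ← one_def, one_mul]
    _ = t * elem k A := by rw [← mul_eq_lmul'_tmul_one_mul ht, mul_comm]
    _ = elem k A := by
        rw [mul_eq_lmul'_tmul_one_mul one_tmul_mul_elem, ht', ← one_def, one_mul]

theorem isIdempotentElem_elem : IsIdempotentElem (elem k A) := by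
  rw [IsIdempotentElem, mul_eq_lmul'_tmul_one_mul one_tmul_mul_elem, lmul_elem, ← one_def, one_mul]

theorem map_elem (ρ : A ≃ₐ[k] A) : map ρ.toAlgHom ρ.toAlgHom (elem k A) = elem k A := by
  refine eq_elem_of (fun s => ?_) ?_
  · simpa using congrArg (map ρ.toAlgHom ρ.toAlgHom) (one_tmul_mul_elem (ρ.symm s))
  · have : (lmul' k).comp (map ρ.toAlgHom ρ.toAlgHom) = ρ.toAlgHom.comp (lmul' k) :=
      Algebra.TensorProduct.ext' fun a b => by simp
    rw [← AlgHom.comp_apply, this, AlgHom.comp_apply, lmul_elem, map_one]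

end Algebra.FormallyUnramified

section GaloisSplitting

open Algebra.FormallyUnramified

variable {k A : Type*} [Field k] [CommRing A] [Algebra k A]

theorem twistedLmul_one_elem [Algebra.FormallyUnramified k A] [Algebra.EssFiniteType k A] :
    twistedLmul (1 : A ≃ₐ[k] A) (elem k A) = 1 := by
  rw [← AlgHom.restrictScalars_apply k, twistedLmul_one, lmul_elem]

theorem twistedLmul_elem_eq_zero [Algebra.FormallyUnramified k A] [Algebra.EssFiniteType k A]
    {σ τ : A ≃ₐ[k] A} (hfix : ∀ a, σ a = a → a ∈ Set.range (algebraMap k A))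
    (hτ : Commute σ τ) (hτ1 : τ ≠ 1) : twistedLmul τ (elem k A) = 0 := by
  have idem : IsIdempotentElem (twistedLmul τ (elem k A)) :=
    isIdempotentElem_elem.map (twistedLmul τ)
  have fixed : σ (twistedLmul τ (elem k A)) = twistedLmul τ (elem k A) := by
    rw [← twistedLmul_map_map hτ.symm, map_elem]
  have twist (a : A) : τ a * twistedLmul τ (elem k A) = a * twistedLmul τ (elem k A) := by
    simpa using congrArg (twistedLmul τ) (one_tmul_mul_elem (R := k) a)
  obtain ⟨c, hc⟩ := hfix _ fixed
  rcases eq_or_ne c 0 with rfl | hc0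
  · rw [← hc, map_zero]
  · have hu : twistedLmul τ (elem k A) = 1 :=
      (IsIdempotentElem.iff_eq_one_of_isUnit (hc ▸ (IsUnit.mk0 c hc0).map _)).1 idem
    exact absurd (AlgEquiv.ext fun a => by simpa [hu] using twist a) hτ1

noncomputable def splittingMap (σ : A ≃ₐ[k] A) (n : ℕ) : A ⊗[k] A →ₗ[A] (Fin n → A) :=
  LinearMap.pi fun c => (twistedLmul (σ ^ (c : ℕ))).toLinearMap

theorem splittingMap_surjective [Algebra.FormallyUnramified k A] [Algebra.EssFiniteType k A]
    {σ : A ≃ₐ[k] A} (hfix : ∀ a, σ a = a → a ∈ Set.range (algebraMap k A)) {n : ℕ}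
    (hn : n ≤ orderOf σ) :
    Function.Surjective (splittingMap σ n) := by
  have single (c : Fin n) : splittingMap σ n (Algebra.TensorProduct.map (AlgHom.id A A)
      ((σ ^ (c : ℕ))⁻¹).toAlgHom (elem k A)) = Pi.single c 1 := by
    ext c'
    have hcomm : Commute σ (σ ^ (c' : ℕ) * (σ ^ (c : ℕ))⁻¹) :=
      (Commute.self_pow σ _).mul_right (Commute.self_pow σ _).inv_right
    have hinj : σ ^ (c' : ℕ) = σ ^ (c : ℕ) ↔ c' = c :=
      (pow_injOn_Iio_orderOf.eq_iff (by simp; omega) (by simp; omega)).trans Fin.val_inj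
    simp only [splittingMap, LinearMap.pi_apply, AlgHom.toLinearMap_apply, twistedLmul_map]
    by_cases h : c' = c
    · simp [h, twistedLmul_one_elem]
    · rw [twistedLmul_elem_eq_zero hfix hcomm (by rwa [Ne, mul_inv_eq_one, hinj]),
        Pi.single_eq_of_ne h]
  intro w
  refine ⟨∑ c, w c • Algebra.TensorProduct.map (AlgHom.id A A) ((σ ^ (c : ℕ))⁻¹).toAlgHom
    (elem k A), ?_⟩
  simp [single, ← pi_eq_sum_univ' w]

end GaloisSplitting

theorem IsGaloisAlgebra.splittingMap_bijective {k A : Type u} [Field k] [CommRing A]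
    [Algebra k A] {σ : A ≃ₐ[k] A} (hG : IsGaloisAlgebra k A σ) :
    Function.Bijective (splittingMap σ (Module.finrank k A)) := by
  have := hG.formallyEtale
  have := hG.finiteDimensional
  have surj := splittingMap_surjective (fun a => (hG.fixed_iff a).1) hG.orderOf_eq.ge
  have hdim : Module.finrank k (A ⊗[k] A) = Module.finrank k (Fin (Module.finrank k A) → A) := by
    simp [Module.finrank_tensorProduct, Module.finrank_pi_fintype]
  exact ⟨(LinearMap.injective_iff_surjective_of_finrank_eq_finrank
    (f := (splittingMap σ _).restrictScalars k) hdim).2 surj, surj⟩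

theorem Fin.sum_ite_add_val_eq {M : Type*} [AddCommMonoid M] {d : ℕ} (i n : ℕ)
    (X : Fin (d + 1) → M) :
    (∑ j : Fin (d + 1), if i + (j : ℕ) = n then X j else 0) =
      if h : i ≤ n ∧ n - i ≤ d then X ⟨n - i, by omega⟩ else 0 := by
  split_ifs with h
  · rw [Finset.sum_eq_single ⟨n - i, by omega⟩
      (fun j _ hj => if_neg fun hij => hj (Fin.ext (by simp; omega))) (by simp),
      if_pos (by simp; omega)]
  · exact Finset.sum_eq_zero fun j _ => if_neg fun hij => h (by omega)

section BlockEntries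

variable {A : Type*} [CommSemiring A]

noncomputable def blockEntries (r m M : ℕ) {N : ℕ} (b : ℕ) :
    Matrix (Fin M) (Fin M) A →ₗ[A] (Fin N → Fin r → A) :=
  LinearMap.pi fun n => LinearMap.pi fun c =>
    if h : (c : ℕ) / m = b ∧ (c : ℕ) % m + n < M then
      Matrix.entryLinearMap A A ⟨c % m, by omega⟩ ⟨c % m + n, h.2⟩
    else 0

theorem blockEntries_apply {r m M N b : ℕ} (X : Matrix (Fin M) (Fin M) A) (n : Fin N) (c : Fin r) :
    blockEntries r m M b X n c = if h : (c : ℕ) / m = b ∧ (c : ℕ) % m + n < M then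
      X ⟨c % m, by omega⟩ ⟨c % m + n, h.2⟩ else 0 := by
  simp only [blockEntries, LinearMap.pi_apply]
  split_ifs <;> rfl

end BlockEntries

section SkewMultiplication

variable {k A : Type u} [Field k] [CommRing A] [Algebra k A] (σ : A ≃ₐ[k] A)

noncomputable def bandMatrix (M c₀ : ℕ) {d : ℕ} :
    (Fin (d + 1) → A ⊗[k] A) →ₗ[A] Matrix (Fin M) (Fin M) A where
  toFun f := Matrix.of fun s t => if h : (s : ℕ) ≤ t ∧ (t : ℕ) - s ≤ d then
    twistedLmul (σ ^ (c₀ + s)) (f ⟨t - s, by omega⟩) else 0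
  map_add' f g := by
    ext s t
    simp only [Matrix.of_apply, Matrix.add_apply, Pi.add_apply]
    split_ifs <;> simp
  map_smul' a f := by
    ext s t
    simp only [Matrix.of_apply, Matrix.smul_apply, Pi.smul_apply, RingHom.id_apply]
    split_ifs <;> simp

theorem bandMatrix_apply {M c₀ d : ℕ} (f : Fin (d + 1) → A ⊗[k] A) (s t : Fin M) :
    bandMatrix σ M c₀ f s t = if h : (s : ℕ) ≤ t ∧ (t : ℕ) - s ≤ d then
      twistedLmul (σ ^ (c₀ + s)) (f ⟨t - s, by omega⟩) else 0 :=
  rfl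

theorem bandMatrix_mul_bandMatrix_apply {M c₀ d : ℕ} (f g : Fin (d + 1) → A ⊗[k] A) (s : Fin M)
    (n : Fin (2 * d + 1)) (hs : (s : ℕ) + d < M) (hn : (s : ℕ) + n < M) :
    (bandMatrix σ M c₀ f * bandMatrix σ M c₀ g) s ⟨s + n, hn⟩ =
      twistedLmul (σ ^ (c₀ + s)) (skewMulBaseMap k A σ d f g n) := by
  have hrhs : twistedLmul (σ ^ (c₀ + s)) (skewMulBaseMap k A σ d f g n) =
      ∑ i : Fin (d + 1), twistedLmul (σ ^ (c₀ + s)) (f i) *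
        if h : (i : ℕ) ≤ n ∧ (n : ℕ) - i ≤ d then
          twistedLmul (σ ^ (c₀ + s + i)) (g ⟨n - i, by omega⟩) else 0 := by
    simp only [skewMulBaseMap, LinearMap.mk₂_apply, Fin.sum_ite_add_val_eq, map_sum]
    refine Finset.sum_congr rfl fun i _ => ?_
    split_ifs <;> simp [twistedLmul_map, pow_add]
  rw [hrhs, Matrix.mul_apply]
  refine (Finset.sum_of_injOn (fun i : Fin (d + 1) => (⟨s + i, by omega⟩ : Fin M))
    (fun i _ j _ hij => by simpa [Fin.val_inj] using hij) (by simp) ?_ ?_).symm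
  · intro t _ ht
    rw [bandMatrix_apply, dif_neg, zero_mul]
    exact fun h => ht ⟨⟨t - s, by omega⟩, by simp, Fin.ext (by simp; omega)⟩
  · intro i _
    have hi := i.isLt
    rw [bandMatrix_apply, bandMatrix_apply,
      dif_pos (show (s : ℕ) ≤ (s : ℕ) + i ∧ (s : ℕ) + i - s ≤ d by omega)]
    simp only [Fin.eta, Nat.add_sub_cancel_left, Nat.add_sub_add_left,
      Nat.add_le_add_iff_left, add_assoc]

theorem compr₂_splittingMap_skewMulBaseMap_eq_sum {d : ℕ} (hd : 0 < d) (r : ℕ) :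
    (skewMulBaseMap k A σ d).compr₂ ((splittingMap σ r).compLeft (Fin (2 * d + 1))) =
      ∑ b : Fin (r / d + 1), ((matMulBil A (3 * d) (3 * d) (3 * d)).compl₁₂
        (bandMatrix σ (3 * d) (b * d)) (bandMatrix σ (3 * d) (b * d))).compr₂
          (blockEntries r d (3 * d) b) := by
  refine LinearMap.ext fun f => LinearMap.ext fun g => funext fun n => funext fun c => ?_
  simp only [LinearMap.compr₂_apply, LinearMap.compLeft_apply, LinearMap.sum_apply,
    Finset.sum_apply, blockEntries_apply, LinearMap.compl₁₂_apply, matMulBil, LinearMap.mk₂_apply]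
  have hmod := Nat.mod_lt c hd
  have hn := n.isLt
  have hblock : (c : ℕ) / d < r / d + 1 := Nat.lt_succ_of_le (Nat.div_le_div_right c.isLt.le)
  rw [Finset.sum_eq_single ⟨c / d, hblock⟩ (fun b _ hb => dif_neg fun h => hb (Fin.ext h.1.symm))
      (by simp), dif_pos ⟨rfl, by omega⟩,
    bandMatrix_mul_bandMatrix_apply σ f g ⟨c % d, by omega⟩ n (by simp; omega)]
  simp [splittingMap, Nat.div_add_mod']

end SkewMultiplication

theorem IsGaloisAlgebra.hasBilinearDecomp_skewMulBaseMap {k A : Type u} [Field k] [CommRing A]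
    [Algebra k A] {σ : A ≃ₐ[k] A} (hG : IsGaloisAlgebra k A σ) {d N : ℕ} (hd : 0 < d)
    (hN : HasBilinearDecomp (matMulBil A (3 * d) (3 * d) (3 * d)) N) :
    HasBilinearDecomp (skewMulBaseMap k A σ d) ((Module.finrank k A / d + 1) * N) := by
  refine HasBilinearDecomp.of_compr₂_equiv
    (LinearEquiv.piCongrRight fun _ => LinearEquiv.ofBijective _ hG.splittingMap_bijective) ?_
  change HasBilinearDecomp ((skewMulBaseMap k A σ d).compr₂ ((splittingMap σ _).compLeft _)) _
  rw [compr₂_splittingMap_skewMulBaseMap_eq_sum σ hd]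
  simpa using HasBilinearDecomp.finset_sum
    (Finset.univ : Finset (Fin (Module.finrank k A / d + 1))) fun b _ => (hN.compl₁₂ _ _).compr₂ _

theorem Nat.cast_div_add_one_le_two_mul_div {r d : ℕ} (hd : 0 < d) (hdr : d ≤ r) :
    ((r / d + 1 : ℕ) : ℝ) ≤ 2 * r / d := by
  have hdR : (0 : ℝ) < d := by exact_mod_cast hd
  have hdiv : ((r / d : ℕ) : ℝ) ≤ r / d := Nat.cast_div_le
  have hone : (1 : ℝ) ≤ r / d := by rw [le_div_iff₀ hdR, one_mul]; exact_mod_cast hdr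
  push_cast
  linarith [show 2 * (r : ℝ) / d = r / d + r / d by ring]

theorem skew_rank_base_change_upper_bound_general (k : Type u) [Field k] :
    ∀ ε : ℝ, 0 < ε →
      ∃ C : ℝ, 0 < C ∧
        ∀ (A : Type u) [CommRing A] [Algebra k A] (σ : A ≃ₐ[k] A),
          IsGaloisAlgebra k A σ →
            ∀ d : ℕ, 0 < d → d < Module.finrank k A →
              (BilinearRank (skewMulBaseMap k A σ d) : ℝ)
                ≤ C * (d : ℝ) ^ (mmExponent k - 1 + ε) * (Module.finrank k A) := by
  intro ε hε
  obtain ⟨τ, C, hτ, hC, hbound⟩ := exists_bilinearRank_matMulBil_le_rpow k hε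
  refine ⟨2 * C * 3 ^ τ, by positivity, fun A _ _ σ hG d hd hdr => ?_⟩
  set r := Module.finrank k A
  set N := BilinearRank (matMulBil k (3 * d) (3 * d) (3 * d))
  have hdecomp : HasBilinearDecomp (skewMulBaseMap k A σ d) ((r / d + 1) * N) :=
    hG.hasBilinearDecomp_skewMulBaseMap hd
      (hasBilinearDecomp_matMulBil k _ _ _).of_bilinearRank.matMulBil_baseChange
  have hdR : (0 : ℝ) < d := by exact_mod_cast hd
  calc (BilinearRank (skewMulBaseMap k A σ d) : ℝ)
      ≤ ((r / d + 1 : ℕ) : ℝ) * N := by exact_mod_cast hdecomp.bilinearRank_le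
    _ ≤ (2 * r / d) * (C * ((3 * d : ℕ) : ℝ) ^ τ) :=
        mul_le_mul (Nat.cast_div_add_one_le_two_mul_div hd hdr.le) (hbound (3 * d) (by omega))
          (by positivity) (by positivity)
    _ = 2 * C * 3 ^ τ * d ^ (τ - 1) * r := by
        rw [Nat.cast_mul, Real.mul_rpow (by norm_num) hdR.le, Real.rpow_sub_one hdR.ne']
        push_cast
        field_simp
    _ ≤ 2 * C * 3 ^ τ * d ^ (mmExponent k - 1 + ε) * r := by
        gcongr
        · exact Nat.one_le_cast.2 hd
        · linarith

theorem skew_rank_base_change_upper_bound (k : Type u) [Field k] [Infinite k] :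
    ∀ ε : ℝ, 0 < ε →
      ∃ C : ℝ, 0 < C ∧
        ∀ (A : Type u) [CommRing A] [Algebra k A] (σ : A ≃ₐ[k] A),
          IsGaloisAlgebra k A σ →
            ∀ d : ℕ, 0 < d → d < Module.finrank k A →
              (BilinearRank (skewMulBaseMap k A σ d) : ℝ)
                ≤ C * (d : ℝ) ^ (mmExponent k - 1 + ε) * (Module.finrank k A) :=
  skew_rank_base_change_upper_bound_general k
end

section
/- Let k be a field with exponent of matrix multiplication ω = ω(k). For every ε > 0 there exists a constant C > 0 such that the following holds for all integers r ≥ 1, m ≥ 0 and all integers k_1, k_2 with 2−r ≤ k_1, k_2 ≤ r−m. For i = 1,2 let V_i be the subspace of r×r matrices P over k whose s-th diagonal (the vector of entries P_{j, j+s−1}) is zero whenever s < k_i or s > k_i + m. Then the bilinear rank over k of the matrix multiplication map restricted to V_1 × V_2 (with values in r×r matrices) is at most C · (m+1)^{ω−1+ε} · r. -/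
open scoped TensorProduct

universe u v



/-- The submodule of r×r matrices supported on diagonals k₀, …, k₀+m (1-indexed diagonal
convention: the entry P i j lies on the s-th diagonal where s = j - i + 1). -/
def bandedSubmodule (k : Type*) [Field k] (r m : ℕ) (k₀ : ℤ) :
    Submodule k (Matrix (Fin r) (Fin r) k) where
  carrier := {P | ∀ i j : Fin r,
    ((j : ℤ) - (i : ℤ) + 1 < k₀ ∨ k₀ + (m : ℤ) < (j : ℤ) - (i : ℤ) + 1) → P i j = 0}
  add_mem' := by
    intro P Q hP hQ i j hij
    simp only [Matrix.add_apply, hP i j hij, hQ i j hij, add_zero]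
  zero_mem' := by intro i j _; rfl
  smul_mem' := by
    intro c P hP i j hij
    simp only [Matrix.smul_apply, hP i j hij, smul_zero]

/-- The multiplication of banded matrices, as a bilinear map. -/
noncomputable def bandedMulMap (k : Type*) [Field k] (r m : ℕ) (k₁ k₂ : ℤ) :
    ↥(bandedSubmodule k r m k₁) →ₗ[k] ↥(bandedSubmodule k r m k₂) →ₗ[k]
      Matrix (Fin r) (Fin r) k :=
  LinearMap.mk₂ k (fun P Q => (P : Matrix (Fin r) (Fin r) k) * (Q : Matrix (Fin r) (Fin r) k))
    (by intros; simp [Matrix.add_mul])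
    (by intros; simp [Matrix.smul_mul])
    (by intros; simp [Matrix.mul_add])
    (by intros; simp [Matrix.mul_smul])


/-! Cut the rows into blocks of `m + 1` consecutive rows. As both factors are banded of width
`m + 1`, row block `t` of `P * Q` is the product of a `3(m+1)`-square window of `P` with a
`3(m+1)`-square window of `Q`, windows running off the matrix being padded with zeros. Hence the
rank is at most `⌈r/(m+1)⌉ · rank ⟨3(m+1), 3(m+1), 3(m+1)⟩ = ⌈r/(m+1)⌉ · O((m+1)^(ω+ε))`, and
`⌈r/(m+1)⌉ ≤ 3r/(m+1)`. -/

section BilinearRank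

variable {R U V W U' V' W' : Type*} [CommSemiring R]
  [AddCommMonoid U] [Module R U] [AddCommMonoid V] [Module R V]
  [AddCommMonoid W] [Module R W]
  [AddCommMonoid U'] [Module R U'] [AddCommMonoid V'] [Module R V']
  [AddCommMonoid W'] [Module R W']

def HasBilinearRankLE (f : U →ₗ[R] V →ₗ[R] W) (n : ℕ) : Prop :=
  ∃ (α : Fin n → (U →ₗ[R] R)) (β : Fin n → (V →ₗ[R] R)) (w : Fin n → W),
    ∀ u v, f u v = ∑ j, α j u • β j v • w j

lemma bilinearRank_le {f : U →ₗ[R] V →ₗ[R] W} {n : ℕ} (h : HasBilinearRankLE f n) :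
    BilinearRank f ≤ n :=
  Nat.sInf_le h

lemma HasBilinearRankLE.bilinearRank {f : U →ₗ[R] V →ₗ[R] W} {n : ℕ}
    (h : HasBilinearRankLE f n) : HasBilinearRankLE f (BilinearRank f) :=
  Nat.sInf_mem (s := {n | HasBilinearRankLE f n}) ⟨n, h⟩

lemma HasBilinearRankLE.of_eq_sum_comp {ι : Type*} (s : Finset ι) {N : ℕ}
    {f : U →ₗ[R] V →ₗ[R] W} {g : U' →ₗ[R] V' →ₗ[R] W'} (hg : HasBilinearRankLE g N)
    (A : ι → U →ₗ[R] U') (B : ι → V →ₗ[R] V') (L : ι → W' →ₗ[R] W)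
    (hf : ∀ u v, f u v = ∑ t ∈ s, L t (g (A t u) (B t v))) :
    HasBilinearRankLE f (s.card * N) := by
  obtain ⟨α, β, w, hw⟩ := hg
  let e : Fin (s.card * N) ≃ s × Fin N :=
    finProdFinEquiv.symm.trans (s.equivFin.symm.prodCongr (.refl _))
  refine ⟨fun j => α (e j).2 ∘ₗ A (e j).1, fun j => β (e j).2 ∘ₗ B (e j).1,
    fun j => L (e j).1 (w (e j).2), fun u v => ?_⟩
  rw [hf, ← e.symm.sum_comp, Fintype.sum_prod_type, ← Finset.sum_attach s]
  refine Finset.sum_congr rfl fun t _ => ?_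
  simp [hw, map_sum, map_smul]

lemma hasBilinearRankLE_matMulBil (e h l : ℕ) :
    HasBilinearRankLE (matMulBil R e h l) (e * h * l) := by
  classical
  let idx : Fin (e * h * l) ≃ (Fin e × Fin h) × Fin l :=
    finProdFinEquiv.symm.trans (finProdFinEquiv.symm.prodCongr (.refl _))
  refine ⟨fun j => Matrix.entryLinearMap R R (idx j).1.1 (idx j).1.2,
    fun j => Matrix.entryLinearMap R R (idx j).1.2 (idx j).2,
    fun j => Matrix.single (idx j).1.1 (idx j).2 1, fun P Q => ?_⟩
  rw [← idx.symm.sum_comp]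
  ext a c
  simp [matMulBil, Matrix.mul_apply, Matrix.sum_apply, Fintype.sum_prod_type, Matrix.single_apply,
    ite_and]

end BilinearRank

section ZeroExtend

variable {R : Type*} [CommSemiring R]

def zeroExtend {p q : ℕ} (M : Matrix (Fin p) (Fin q) R) (i j : ℤ) : R :=
  if h : 0 ≤ i ∧ i < p ∧ 0 ≤ j ∧ j < q then M ⟨i.toNat, by omega⟩ ⟨j.toNat, by omega⟩ else 0

variable {p q s : ℕ}

@[simp]
lemma zeroExtend_natCast (M : Matrix (Fin p) (Fin q) R) (i : Fin p) (j : Fin q) :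
    zeroExtend M ((i : ℕ) : ℤ) ((j : ℕ) : ℤ) = M i j := by
  rw [zeroExtend, dif_pos (by omega)]
  simp

lemma zeroExtend_eq_zero (M : Matrix (Fin p) (Fin q) R) {i j : ℤ}
    (h : ¬(0 ≤ i ∧ i < p ∧ 0 ≤ j ∧ j < q)) : zeroExtend M i j = 0 :=
  dif_neg h

lemma zeroExtend_add (M N : Matrix (Fin p) (Fin q) R) (i j : ℤ) :
    zeroExtend (M + N) i j = zeroExtend M i j + zeroExtend N i j := by
  unfold zeroExtend; split <;> simp

lemma zeroExtend_smul (c : R) (M : Matrix (Fin p) (Fin q) R) (i j : ℤ) :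
    zeroExtend (c • M) i j = c * zeroExtend M i j := by
  unfold zeroExtend; split <;> simp

lemma zeroExtend_mul (M : Matrix (Fin p) (Fin q) R) (N : Matrix (Fin q) (Fin s) R) (i l : ℤ) :
    zeroExtend (M * N) i l = ∑ᶠ j, zeroExtend M i j * zeroExtend N j l := by
  by_cases h : 0 ≤ i ∧ i < p ∧ 0 ≤ l ∧ l < s
  · obtain ⟨i, rfl⟩ : ∃ i' : Fin p, ((i' : ℕ) : ℤ) = i := ⟨⟨i.toNat, by omega⟩, by simp; omega⟩
    obtain ⟨l, rfl⟩ : ∃ l' : Fin s, ((l' : ℕ) : ℤ) = l := ⟨⟨l.toNat, by omega⟩, by simp; omega⟩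
    have hsupp : ∀ j, zeroExtend M i j * zeroExtend N j l ≠ 0 → 0 ≤ j ∧ j < q := by
      intro j hj
      by_contra hj'
      exact hj (by rw [zeroExtend_eq_zero M (by omega), zero_mul])
    rw [zeroExtend_natCast, Matrix.mul_apply, finsum_eq_sum_of_support_subset _
      (s := Finset.univ.image fun j : Fin q => ((j : ℕ) : ℤ)),
      Finset.sum_image fun a _ b _ hab => by simpa [Fin.ext_iff] using hab]
    · simp
    · intro j hj
      have hj := hsupp j hj
      exact Finset.mem_image.2 ⟨⟨j.toNat, by omega⟩, Finset.mem_univ _, by simp; omega⟩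
  · rw [zeroExtend_eq_zero _ h, eq_comm]
    refine finsum_eq_zero_of_forall_eq_zero fun j => ?_
    by_cases hi : 0 ≤ i ∧ i < p
    · rw [zeroExtend_eq_zero N (by omega), mul_zero]
    · rw [zeroExtend_eq_zero M (by omega), zero_mul]

end ZeroExtend

section Windows

variable {R : Type*} [CommSemiring R] {r s : ℕ}

/-- The `p × q` window of `M` whose upper-left corner sits at position `(a, c)`, padded with
zeros where it leaves `M`. -/
def windowMap (a c : ℤ) (p q : ℕ) : Matrix (Fin r) (Fin s) R →ₗ[R] Matrix (Fin p) (Fin q) R where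
  toFun M := Matrix.of fun x y => zeroExtend M (a + (x : ℕ)) (c + (y : ℕ))
  map_add' M N := by ext; simp [zeroExtend_add]
  map_smul' t M := by ext; simp [zeroExtend_smul]

@[simp]
lemma windowMap_apply (a c : ℤ) (p q : ℕ) (M : Matrix (Fin r) (Fin s) R) (x : Fin p) (y : Fin q) :
    windowMap a c p q M x y = zeroExtend M (a + (x : ℕ)) (c + (y : ℕ)) :=
  rfl

lemma zeroExtend_windowMap (a c : ℤ) (p q : ℕ) (M : Matrix (Fin r) (Fin s) R) (x y : ℤ) :
    zeroExtend (windowMap a c p q M) x y =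
      if 0 ≤ x ∧ x < p ∧ 0 ≤ y ∧ y < q then zeroExtend M (a + x) (c + y) else 0 := by
  unfold zeroExtend
  split_ifs <;> simp [windowMap, zeroExtend, *]

def rowBlock (b t : ℕ) : Matrix (Fin r) (Fin s) R →ₗ[R] Matrix (Fin r) (Fin s) R where
  toFun M := Matrix.of fun i l => if (i : ℕ) / b = t then M i l else 0
  map_add' M N := by ext; simp only [Matrix.of_apply, Matrix.add_apply]; split_ifs <;> simp
  map_smul' c M := by ext; simp only [Matrix.of_apply, Matrix.smul_apply]; split_ifs <;> simp

lemma sum_rowBlock {b T : ℕ} (hb : 0 < b) (hT : r ≤ T * b) (M : Matrix (Fin r) (Fin s) R) :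
    ∑ t ∈ Finset.range T, rowBlock b t M = M := by
  ext i l
  have : (i : ℕ) / b < T := (Nat.div_lt_iff_lt_mul hb).2 (by omega)
  simp [rowBlock, Matrix.sum_apply, Finset.sum_ite_eq, this]

end Windows

section Banded

variable {k : Type*} [Field k] {r m : ℕ}

lemma sub_mem_Icc_of_zeroExtend_ne_zero {k₀ : ℤ} {P : Matrix (Fin r) (Fin r) k}
    (hP : P ∈ bandedSubmodule k r m k₀) {i j : ℤ} (h : zeroExtend P i j ≠ 0) :
    j - i ∈ Set.Icc (k₀ - 1) (k₀ - 1 + m) := by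
  by_contra hband
  rw [Set.mem_Icc] at hband
  unfold zeroExtend at h
  split_ifs at h
  · exact h (hP _ _ (by simp; omega))
  · exact h rfl

lemma rowBlock_mul_eq {k₁ k₂ : ℤ} {P Q : Matrix (Fin r) (Fin r) k}
    (hP : P ∈ bandedSubmodule k r m k₁) (hQ : Q ∈ bandedSubmodule k r m k₂) (t : ℕ) :
    let a : ℤ := t * (m + 1)
    let n := 3 * (m + 1)
    rowBlock (m + 1) t (P * Q) = rowBlock (m + 1) t (windowMap (-a) (-(a + k₁ + k₂ - 2)) r r
      (windowMap a (a + k₁ - 1) n n P * windowMap (a + k₁ - 1) (a + k₁ + k₂ - 2) n n Q)) := by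
  intro a n
  ext i l
  simp only [rowBlock, windowMap_apply, LinearMap.coe_mk, AddHom.coe_mk, Matrix.of_apply]
  split_ifs with hi
  swap; · rfl
  have hia : a ≤ (i : ℕ) ∧ ((i : ℕ) : ℤ) < a + m + 1 := by
    have hmod : (((i : ℕ) % (m + 1) : ℕ) : ℤ) < m + 1 := by exact_mod_cast Nat.mod_lt _ m.succ_pos
    have hdiv : ((i : ℕ) : ℤ) = (m + 1) * t + (((i : ℕ) % (m + 1) : ℕ) : ℤ) := by
      exact_mod_cast (hi ▸ Nat.div_add_mod (i : ℕ) (m + 1)).symm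
    constructor <;> simp only [a] <;> linarith [Int.natCast_nonneg ((i : ℕ) % (m + 1))]
  rw [← zeroExtend_natCast (P * Q), zeroExtend_mul, zeroExtend_mul,
    ← finsum_comp_equiv (Equiv.addLeft (a + k₁ - 1))]
  refine finsum_congr fun y => ?_
  simp only [Equiv.coe_addLeft, zeroExtend_windowMap, add_neg_cancel_left]
  by_cases hPy : zeroExtend P i (a + k₁ - 1 + y) = 0
  · simp [hPy]
  by_cases hQy : zeroExtend Q (a + k₁ - 1 + y) l = 0
  · simp [hQy]
  obtain ⟨hP₁, hP₂⟩ := sub_mem_Icc_of_zeroExtend_ne_zero hP hPy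
  obtain ⟨hQ₁, hQ₂⟩ := sub_mem_Icc_of_zeroExtend_ne_zero hQ hQy
  rw [if_pos (by omega), if_pos (by omega)]

lemma hasBilinearRankLE_bandedMulMap {k₁ k₂ : ℤ} {N : ℕ}
    (hN : HasBilinearRankLE (matMulBil k (3 * (m + 1)) (3 * (m + 1)) (3 * (m + 1))) N) :
    HasBilinearRankLE (bandedMulMap k r m k₁ k₂) ((r + m) / (m + 1) * N) := by
  have hT : r ≤ (r + m) / (m + 1) * (m + 1) := by
    have := Nat.lt_div_mul_add (a := r + m) (b := m + 1) (by omega)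
    omega
  let a : ℕ → ℤ := fun t => t * (m + 1)
  simpa using hN.of_eq_sum_comp (Finset.range ((r + m) / (m + 1)))
    (fun t => windowMap (a t) (a t + k₁ - 1) _ _ ∘ₗ (bandedSubmodule k r m k₁).subtype)
    (fun t => windowMap (a t + k₁ - 1) (a t + k₁ + k₂ - 2) _ _ ∘ₗ
      (bandedSubmodule k r m k₂).subtype)
    (fun t => rowBlock (m + 1) t ∘ₗ windowMap (-a t) (-(a t + k₁ + k₂ - 2)) r r)
    fun P Q => by
      simp only [bandedMulMap, matMulBil, LinearMap.mk₂_apply, LinearMap.comp_apply,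
        Submodule.subtype_apply]
      rw [← sum_rowBlock m.succ_pos hT (P.1 * Q.1)]
      exact Finset.sum_congr rfl fun t _ => rowBlock_mul_eq P.2 Q.2 t

end Banded

lemma exists_bilinearRank_matMulBil_le (R : Type*) [CommSemiring R] {ε : ℝ} (hε : 0 < ε) :
    ∃ τ < mmExponent R + ε, ∃ C > 0, ∀ n : ℕ, 1 ≤ n →
      (BilinearRank (matMulBil R n n n) : ℝ) ≤ C * (n : ℝ) ^ τ := by
  have hcube : ∀ n : ℕ, 1 ≤ n → (BilinearRank (matMulBil R n n n) : ℝ) ≤ 1 * (n : ℝ) ^ (3 : ℝ) :=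
    fun n _ => by
      rw [one_mul, show (3 : ℝ) = (3 : ℕ) by norm_num, Real.rpow_natCast]
      exact_mod_cast (bilinearRank_le (hasBilinearRankLE_matMulBil n n n)).trans_eq (by ring)
  obtain ⟨τ, ⟨C, hC, hrank⟩, hτ⟩ := Real.lt_sInf_add_pos (s := {τ : ℝ | ∃ C : ℝ, 0 < C ∧
    ∀ n : ℕ, 1 ≤ n → (BilinearRank (matMulBil R n n n) : ℝ) ≤ C * (n : ℝ) ^ τ})
    ⟨3, 1, one_pos, hcube⟩ hε
  exact ⟨τ, hτ, C, hC, hrank⟩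

theorem banded_matrix_mul_rank_upper_bound (k : Type*) [Field k] :
    ∀ ε : ℝ, 0 < ε →
      ∃ C : ℝ, 0 < C ∧
        ∀ (r : ℕ), 1 ≤ r → ∀ (m : ℕ) (k₁ k₂ : ℤ),
          2 - (r : ℤ) ≤ k₁ → k₁ ≤ (r : ℤ) - (m : ℤ) →
          2 - (r : ℤ) ≤ k₂ → k₂ ≤ (r : ℤ) - (m : ℤ) →
            (BilinearRank (bandedMulMap k r m k₁ k₂) : ℝ)
              ≤ C * ((m : ℝ) + 1) ^ (mmExponent k - 1 + ε) * r := by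
  intro ε hε
  obtain ⟨τ, hτ, C, hC, hrank⟩ := exists_bilinearRank_matMulBil_le k hε
  refine ⟨C * 3 ^ (τ + 1), by positivity, fun r _ m k₁ k₂ hk₁ hk₁' _ _ => ?_⟩
  set T := (r + m) / (m + 1)
  set N := BilinearRank (matMulBil k (3 * (m + 1)) (3 * (m + 1)) (3 * (m + 1)))
  have hbanded : BilinearRank (bandedMulMap k r m k₁ k₂) ≤ T * N :=
    bilinearRank_le (hasBilinearRankLE_bandedMulMap
      (hasBilinearRankLE_matMulBil _ _ _).bilinearRank)
  have hN : (N : ℝ) ≤ C * (3 * ((m : ℝ) + 1)) ^ τ := by exact_mod_cast hrank _ (by omega)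
  -- a band of width `m + 1` fits into the matrix only if `m ≤ 2r - 2`
  have hT : (T : ℝ) * ((m : ℝ) + 1) ≤ 3 * r := by
    exact_mod_cast (Nat.div_mul_le_self (r + m) (m + 1)).trans (by omega)
  calc (BilinearRank (bandedMulMap k r m k₁ k₂) : ℝ)
      ≤ T * N := by exact_mod_cast hbanded
    _ ≤ T * (C * (3 * ((m : ℝ) + 1)) ^ τ) := by gcongr
    _ = C * 3 ^ τ * ((m : ℝ) + 1) ^ (τ - 1) * (T * ((m : ℝ) + 1)) := by
      rw [Real.mul_rpow (by norm_num) (by positivity), Real.rpow_sub_one (by positivity)]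
      field_simp
    _ ≤ C * 3 ^ τ * ((m : ℝ) + 1) ^ (τ - 1) * (3 * r) := by gcongr
    _ = C * 3 ^ (τ + 1) * ((m : ℝ) + 1) ^ (τ - 1) * r := by
      rw [Real.rpow_add_one (by norm_num)]; ring
    _ ≤ C * 3 ^ (τ + 1) * ((m : ℝ) + 1) ^ (mmExponent k - 1 + ε) * r := by
      gcongr <;> linarith
end

section
/- Let k be a field of characteristic r > 0 (so r is prime). Let α = diag(0, 1, …, r−1) ∈ Mat_{r×r}(k) and let β ∈ Mat_{r×r}(k) be the cyclic permutation matrix with β_{i,i+1} = 1 for 1 ≤ i ≤ r−1, β_{r,1} = 1, and all other entries 0. Let J_1 be the two-sided ideal of the free associative k-algebra k⟨X,A⟩ generated by XA − (A+1)X, and J_3 the two-sided ideal generated by X^r − 1 and A^r − A. Then the assignment A ↦ α, X ↦ β induces a well-defined k-algebra homomorphism k⟨X,A⟩/(J_1 + J_3) → Mat_{r×r}(k), and this homomorphism is a k-algebra isomorphism. -/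
universe u

/-- The diagonal matrix `diag(0, 1, …, r−1)` over `k`. -/
def natDiag (k : Type u) [Field k] (r : ℕ) : Matrix (Fin r) (Fin r) k :=
  Matrix.diagonal fun i => ((i : ℕ) : k)

/-- The cyclic permutation matrix `β` with `β_{i,i+1} = 1` (`1 ≤ i ≤ r−1`), `β_{r,1} = 1`,
and all other entries `0` (written with `0`-indexed rows and columns). -/
def cycPermMatrix (k : Type u) [Field k] (r : ℕ) : Matrix (Fin r) (Fin r) k :=
  Matrix.of fun i j => if ((i : ℕ) + 1) % r = (j : ℕ) then 1 else 0

/-- The relation on `k⟨X,A⟩` (free algebra on two generators, `X := ι 0`, `A := ι 1`)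
generating the two-sided ideal `J₁ + J₃ = (X·A − (A+1)·X) + (Xʳ − 1, Aʳ − A)`. -/
inductive artinModRel (k : Type u) [Field k] (r : ℕ) :
    FreeAlgebra k (Fin 2) → FreeAlgebra k (Fin 2) → Prop
  | comm : artinModRel k r (FreeAlgebra.ι k (0 : Fin 2) * FreeAlgebra.ι k (1 : Fin 2))
      ((FreeAlgebra.ι k (1 : Fin 2) + 1) * FreeAlgebra.ι k (0 : Fin 2))
  | xpow : artinModRel k r (FreeAlgebra.ι k (0 : Fin 2) ^ r) 1
  | apow : artinModRel k r (FreeAlgebra.ι k (1 : Fin 2) ^ r) (FreeAlgebra.ι k (1 : Fin 2))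

/-!
The assignment respects the relations because `β α = (α + 1) β`, `βʳ = 1`, and `αʳ = α` by
Fermat's little theorem. It is onto: `α` is diagonal with the distinct eigenvalues `0, …, r − 1`,
so Lagrange interpolation in `α` yields every diagonal matrix unit `Eᵢᵢ`, and `Eᵢᵢ βᵐ` runs
through all matrix units `Eᵢⱼ`. It is injective by counting dimensions: `X A = (A + 1) X` lets
us move every `X` to the right, so the quotient is spanned by the `r²` monomials `Aⁱ Xʲ` with
`0 ≤ i, j < r`, and `r² = dim Mat_{r×r}(k)`.
-/

open Matrix

section ShiftRelation

variable {k R : Type*} [CommSemiring k] [Semiring R] [Algebra k R]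

theorem pow_mul_eq_add_natCast_mul_pow {x a : R} (hxa : x * a = (a + 1) * x) (j : ℕ) :
    x ^ j * a = (a + j) * x ^ j := by
  induction j with
  | zero => simp
  | succ j ih =>
    rw [pow_succ, mul_assoc, hxa, ← mul_assoc, add_mul, mul_add, ih, mul_one, Nat.cast_succ]
    noncomm_ring

theorem Submodule.eq_top_of_one_mem_of_mul_mem_of_adjoin_eq_top {s : Set R}
    (hs : Algebra.adjoin k s = ⊤) {V : Submodule k R} (h1 : 1 ∈ V)
    (hmul : ∀ y ∈ s, ∀ v ∈ V, v * y ∈ V) : V = ⊤ := by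
  have hright (y : R) : ∀ v ∈ V, v * y ∈ V := by
    induction (hs ▸ Algebra.mem_top : y ∈ Algebra.adjoin k s) using
      Algebra.adjoin_induction with
    | mem y hy => exact hmul y hy
    | algebraMap c =>
      intro v hv
      simpa [Algebra.algebraMap_eq_smul_one] using V.smul_mem c hv
    | add y z _ _ hy hz =>
      intro v hv
      simpa [mul_add] using add_mem (hy v hv) (hz v hv)
    | mul y z _ _ hy hz =>
      intro v hv
      simpa [mul_assoc] using hz _ (hy v hv)
  exact eq_top_iff.mpr fun y _ => by simpa using hright y 1 h1

theorem span_pow_mul_pow_eq_top {x a : R} {r : ℕ} (hr : 1 < r)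
    (hgen : Algebra.adjoin k {x, a} = ⊤) (hxa : x * a = (a + 1) * x) (hx : x ^ r = 1)
    (ha : a ^ r = a) :
    Submodule.span k (Set.range fun p : Fin r × Fin r => a ^ (p.1 : ℕ) * x ^ (p.2 : ℕ)) = ⊤ := by
  set V := Submodule.span k (Set.range fun p : Fin r × Fin r => a ^ (p.1 : ℕ) * x ^ (p.2 : ℕ))
  have hmem {i j : ℕ} (hi : i < r) (hj : j < r) : a ^ i * x ^ j ∈ V :=
    Submodule.subset_span ⟨(⟨i, hi⟩, ⟨j, hj⟩), rfl⟩
  have hmem_succ_left {i j : ℕ} (hi : i < r) (hj : j < r) : a ^ (i + 1) * x ^ j ∈ V := by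
    rcases (Nat.succ_le_of_lt hi).lt_or_eq with hi' | rfl
    · exact hmem hi' hj
    · rw [ha, ← pow_one a]
      exact hmem hr hj
  have hmem_succ_right {i j : ℕ} (hi : i < r) (hj : j < r) : a ^ i * x ^ (j + 1) ∈ V := by
    rcases (Nat.succ_le_of_lt hj).lt_or_eq with hj' | rfl
    · exact hmem hi hj'
    · rw [hx, ← pow_zero x]
      exact hmem hi (by omega)
  have hmul_x : V ≤ V.comap (LinearMap.mulRight k x) := by
    rw [Submodule.span_le]
    rintro _ ⟨⟨i, j⟩, rfl⟩
    simpa [mul_assoc, ← pow_succ] using hmem_succ_right i.isLt j.isLt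
  have hmul_a : V ≤ V.comap (LinearMap.mulRight k a) := by
    rw [Submodule.span_le]
    rintro _ ⟨⟨i, j⟩, rfl⟩
    have hexpand : a ^ (i : ℕ) * x ^ (j : ℕ) * a
        = a ^ ((i : ℕ) + 1) * x ^ (j : ℕ) + (j : ℕ) • (a ^ (i : ℕ) * x ^ (j : ℕ)) := by
      rw [mul_assoc, pow_mul_eq_add_natCast_mul_pow hxa, ← mul_assoc, mul_add, add_mul,
        ← Nat.cast_comm, pow_succ, nsmul_eq_mul]
      simp only [mul_assoc]
    simp only [SetLike.mem_coe, Submodule.mem_comap, LinearMap.mulRight_apply, hexpand]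
    exact add_mem (hmem_succ_left i.isLt j.isLt) (nsmul_mem (hmem i.isLt j.isLt) _)
  refine Submodule.eq_top_of_one_mem_of_mul_mem_of_adjoin_eq_top hgen
    (by simpa using hmem (i := 0) (j := 0) (by omega) (by omega)) ?_
  rintro y (rfl | rfl)
  exacts [fun v hv => hmul_x hv, fun v hv => hmul_a hv]

end ShiftRelation

section Matrices

variable (k : Type u) [Field k] (r : ℕ)

theorem cycPermMatrix_pow (m : ℕ) :
    cycPermMatrix k r ^ m =
      Matrix.of fun i j : Fin r => if ((i : ℕ) + m) % r = j then 1 else 0 := by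
  induction m with
  | zero =>
    ext i j
    simp [Matrix.one_apply, Nat.mod_eq_of_lt i.isLt, Fin.val_inj]
  | succ m ih =>
    ext i j
    let l : Fin r := ⟨((i : ℕ) + m) % r, Nat.mod_lt _ i.pos⟩
    rw [pow_succ, ih, Matrix.mul_apply, Finset.sum_eq_single l]
    · simp [cycPermMatrix, l, ← add_assoc]
    · intro l' _ hl'
      rw [of_apply, if_neg fun h => hl' (Fin.ext h.symm), zero_mul]
    · simp

theorem cycPermMatrix_pow_self : cycPermMatrix k r ^ r = 1 := by
  ext i j
  simp [cycPermMatrix_pow, Matrix.one_apply, Nat.mod_eq_of_lt i.isLt, Fin.val_inj]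

theorem cycPermMatrix_mul_natDiag [CharP k r] :
    cycPermMatrix k r * natDiag k r = (natDiag k r + 1) * cycPermMatrix k r := by
  rw [natDiag, ← diagonal_one, diagonal_add]
  ext i j
  rw [mul_diagonal, diagonal_mul]
  by_cases h : ((i : ℕ) + 1) % r = j
  · simp only [cycPermMatrix, of_apply, h, if_true, one_mul, mul_one]
    rw [← h, ← CharP.natCast_eq_natCast_mod, Nat.cast_succ]
  · simp [cycPermMatrix, h]

theorem natDiag_pow_self [ExpChar k r] : natDiag k r ^ r = natDiag k r := by
  rw [natDiag, diagonal_pow]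
  congr
  funext i
  have := map_natCast (frobenius k r) i
  rwa [frobenius_def] at this

theorem single_self_mem_adjoin_diagonal {n : Type*} [Fintype n] [DecidableEq n] {d : n → k}
    (hd : Function.Injective d) (i : n) :
    single i i (1 : k) ∈ Algebra.adjoin k {diagonal d} := by
  have heval : (fun j => (Lagrange.basis Finset.univ d i).eval (d j)) = Pi.single i 1 := by
    funext j
    rcases eq_or_ne j i with rfl | hji
    · simp [Lagrange.eval_basis_self hd.injOn]
    · simp [Lagrange.eval_basis_of_ne hji.symm, hji]
  have : Polynomial.aeval (diagonal d) (Lagrange.basis Finset.univ d i) = single i i 1 := by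
    rw [← diagonal_single, ← heval, show diagonal d = diagonalAlgHom k d from rfl,
      Polynomial.aeval_algHom_apply, diagonalAlgHom_apply]
    congr 1
    funext j
    rw [Polynomial.aeval_fn_apply, Polynomial.coe_aeval_eq_eval]
  exact this ▸ Polynomial.aeval_mem_adjoin_singleton k _

theorem adjoin_cycPermMatrix_natDiag_eq_top [CharP k r] :
    Algebra.adjoin k {cycPermMatrix k r, natDiag k r} = ⊤ := by
  set S := Algebra.adjoin k {cycPermMatrix k r, natDiag k r}
  have hdiag (i : Fin r) : single i i 1 ∈ S := by
    have hle : Algebra.adjoin k {natDiag k r} ≤ S := Algebra.adjoin_mono (by simp)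
    exact hle (single_self_mem_adjoin_diagonal k
      (fun i j h => Fin.ext (CharP.natCast_injOn_Iio k r i.isLt j.isLt h)) i)
  have hsingle (i j : Fin r) : single i j (1 : k) ∈ S := by
    have : single i i 1 * cycPermMatrix k r ^ ((j : ℕ) + r - i) = single i j 1 := by
      ext p q
      rcases eq_or_ne p i with rfl | hpi
      · have : ((p : ℕ) + ((j : ℕ) + r - p)) % r = j := by
          rw [Nat.add_sub_cancel' (by omega), Nat.add_mod_right, Nat.mod_eq_of_lt j.isLt]
        simp [cycPermMatrix_pow, this, Fin.val_inj, single_apply]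
      · simp [single_mul_apply_of_ne _ _ _ _ _ hpi, hpi.symm]
    rw [← this]
    exact mul_mem (hdiag i) (pow_mem (Algebra.subset_adjoin (Set.mem_insert _ _)) _)
  refine eq_top_iff.mpr fun M _ => ?_
  rw [matrix_eq_sum_single M]
  exact sum_mem fun i _ => sum_mem fun j _ => by simpa using S.smul_mem (hsingle i j) (M i j)

end Matrices

theorem RingQuot.adjoin_range_mkAlgHom_ι_eq_top {k X : Type*} [CommSemiring k]
    (s : FreeAlgebra k X → FreeAlgebra k X → Prop) :
    Algebra.adjoin k (Set.range fun i => RingQuot.mkAlgHom k s (FreeAlgebra.ι k i)) = ⊤ := by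
  rw [Set.range_comp' (RingQuot.mkAlgHom k s), ← AlgHom.map_adjoin, FreeAlgebra.adjoin_range_ι,
    Algebra.map_top, AlgHom.range_eq_top]
  exact RingQuot.mkAlgHom_surjective k s

noncomputable def artinQuotToMatrix (k : Type u) [Field k] (r : ℕ) [CharP k r] [ExpChar k r] :
    RingQuot (artinModRel k r) →ₐ[k] Matrix (Fin r) (Fin r) k :=
  RingQuot.liftAlgHom k ⟨FreeAlgebra.lift k ![cycPermMatrix k r, natDiag k r], fun _ _ h => by
    cases h <;> simp [cycPermMatrix_mul_natDiag, cycPermMatrix_pow_self, natDiag_pow_self]⟩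

theorem artin_quotient_iso_matrix (k : Type u) [Field k] (r : ℕ) (hr : 0 < r) [CharP k r] :
    ∃ φ : RingQuot (artinModRel k r) ≃ₐ[k] Matrix (Fin r) (Fin r) k,
      φ (RingQuot.mkAlgHom k (artinModRel k r) (FreeAlgebra.ι k (1 : Fin 2))) = natDiag k r ∧
      φ (RingQuot.mkAlgHom k (artinModRel k r) (FreeAlgebra.ι k (0 : Fin 2)))
          = cycPermMatrix k r := by
  have hp : r.Prime := (CharP.char_is_prime_or_zero k r).resolve_right hr.ne'
  have : Fact r.Prime := ⟨hp⟩
  set x := RingQuot.mkAlgHom k (artinModRel k r) (FreeAlgebra.ι k (0 : Fin 2))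
  set a := RingQuot.mkAlgHom k (artinModRel k r) (FreeAlgebra.ι k (1 : Fin 2))
  set φ := artinQuotToMatrix k r
  have hφx : φ x = cycPermMatrix k r := by simp [φ, x, artinQuotToMatrix]
  have hφa : φ a = natDiag k r := by simp [φ, a, artinQuotToMatrix]
  have hgen : Algebra.adjoin k {x, a} = ⊤ := by
    rw [← RingQuot.adjoin_range_mkAlgHom_ι_eq_top (artinModRel k r)]
    congr 1
    ext
    simp [Fin.exists_fin_two, eq_comm, x, a]
  have hspan := span_pow_mul_pow_eq_top hp.one_lt hgen
    (by simpa using RingQuot.mkAlgHom_rel k artinModRel.comm)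
    (by simpa using RingQuot.mkAlgHom_rel k artinModRel.xpow)
    (by simpa using RingQuot.mkAlgHom_rel k artinModRel.apow)
  have : Module.Finite k (RingQuot (artinModRel k r)) :=
    Module.finite_def.mpr (hspan ▸ Submodule.fg_span (Set.finite_range _))
  have hsurj : Function.Surjective φ := by
    rw [← AlgHom.range_eq_top, ← Algebra.map_top, ← hgen, AlgHom.map_adjoin, Set.image_pair,
      hφx, hφa, adjoin_cycPermMatrix_natDiag_eq_top]
  have hbij := OrzechProperty.bijective_of_surjective_of_finrank_le φ.toLinearMap hsurj (by
    simpa [Module.finrank_matrix] using finrank_le_of_span_eq_top hspan)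
  exact ⟨AlgEquiv.ofBijective φ hbij, hφa, hφx⟩
end

section
/- Let k be a field and R a nonzero commutative k-algebra. Then ω(R) = ω(k), where for a commutative ring S, ω(S) is the infimum of the real numbers τ for which there is a constant C > 0 such that rank_S(⟨n,n,n⟩_S) ≤ C·n^τ for all n ≥ 1, with ⟨n,n,n⟩_S the S-bilinear map of multiplying two n×n matrices over S. -/
/-!
For a ring map `k → R`, pushing a decomposition of `⟨n,n,n⟩` over `k` forward gives one over `R`,
so `ω(R) ≤ ω(k)`. Conversely, the finitely many coefficients of a decomposition of `⟨N,N,N⟩` of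
length `r` over `R` generate a finitely generated `k`-subalgebra `B ⊆ R`. A residue field `L` of
`B` is finite over `k` by Zariski's lemma, and writing `L`-coefficients in a `k`-basis of `L`
gives `rank_k ⟨m,m,m⟩ ≤ [L:k]² · rank_L ⟨m,m,m⟩`. With Kronecker products,
`rank_k ⟨N^s,N^s,N^s⟩ ≤ [L:k]² · r^s`, so any `τ` admissible for `R` (take `N` with
`r ≤ N^(τ+ε)`) yields the admissible exponent `τ + ε` for `k`, and `ω(k) ≤ ω(R)`.
-/

open scoped TensorProduct

universe u v



open Matrix

section Decomposition

variable {S : Type*} [CommSemiring S]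

/-- The right-hand side is the `(p, q)` entry of `single i j 1 * single k l 1`, so `a`, `b`, `c`
decompose the structure tensor of matrix multiplication. Unlike a decomposition into linear forms
(see `mmRank_eq_sInf`), this coordinate form transports entrywise along ring maps and Kronecker
products. -/
def IsMatMulDecomp {ι κ : Type*} [Fintype ι] [DecidableEq κ] (a b c : ι → κ → κ → S) :
    Prop :=
  ∀ i j k l p q, ∑ t, a t i j * b t k l * c t p q = if j = k ∧ i = p ∧ l = q then 1 else 0

variable (S) in
def HasMatMulDecomp (n r : ℕ) : Prop :=
  ∃ a b c : Fin r → Fin n → Fin n → S, IsMatMulDecomp a b c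

variable (S) in
noncomputable abbrev mmRank (n : ℕ) : ℕ := BilinearRank (matMulBil S n n n)

def pairingLM {κ : Type*} [Fintype κ] (a : κ → κ → S) : Matrix κ κ S →ₗ[S] S where
  toFun u := ∑ i, ∑ j, a i j * u i j
  map_add' u v := by simp only [Matrix.add_apply, mul_add, Finset.sum_add_distrib]
  map_smul' s u := by
    simp only [Matrix.smul_apply, smul_eq_mul, Finset.mul_sum, RingHom.id_apply, mul_left_comm]

lemma pairingLM_single {κ : Type*} [Fintype κ] [DecidableEq κ] (a : κ → κ → S) (i j : κ) :
    pairingLM a (single i j 1) = a i j := by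
  simp [pairingLM, single_apply, ite_and]

lemma single_mul_single_apply {κ : Type*} [Fintype κ] [DecidableEq κ] (i j k l p q : κ) :
    (single i j (1 : S) * single k l 1 : Matrix κ κ S) p q =
      if j = k ∧ i = p ∧ l = q then 1 else 0 := by
  by_cases j = k <;> by_cases i = p <;> by_cases l = q <;> simp [*, mul_apply, single_apply]

lemma mmRank_eq_sInf (n : ℕ) : mmRank S n = sInf {r | HasMatMulDecomp S n r} := by
  refine congrArg sInf (Set.ext fun r => ⟨?_, ?_⟩)
  · rintro ⟨α, β, w, h⟩
    refine ⟨fun t i j => α t (single i j 1), fun t k l => β t (single k l 1), w, ?_⟩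
    intro i j k l p q
    have := congrFun (congrFun (h (single i j 1) (single k l 1)) p) q
    rw [matMulBil, LinearMap.mk₂_apply, single_mul_single_apply] at this
    simpa [Matrix.sum_apply, mul_assoc] using this.symm
  · rintro ⟨a, b, c, h⟩
    refine ⟨fun t => pairingLM (a t), fun t => pairingLM (b t), fun t => Matrix.of (c t), ?_⟩
    have key : matMulBil S n n n = ∑ t, ((LinearMap.mul S S).compl₁₂ (pairingLM (a t))
        (pairingLM (b t))).compr₂ (LinearMap.toSpanSingleton S _ (Matrix.of (c t))) := by
      refine LinearMap.ext_basis (stdBasis S _ _) (stdBasis S _ _) fun ⟨i, j⟩ ⟨k, l⟩ => ?_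
      ext p q
      simp [stdBasis_eq_single, pairingLM_single, matMulBil, Matrix.sum_apply,
        single_mul_single_apply, h i j k l p q]
    intro u v
    rw [key]
    simp [mul_smul]

namespace IsMatMulDecomp

variable {ι ι' κ κ' : Type*} [Fintype ι] [Fintype ι'] [DecidableEq κ] [DecidableEq κ']
  {a b c : ι → κ → κ → S}

lemma comp_embedding (h : IsMatMulDecomp a b c) (f : κ' ↪ κ) :
    IsMatMulDecomp (fun t i j => a t (f i) (f j)) (fun t i j => b t (f i) (f j))
      (fun t i j => c t (f i) (f j)) := by
  intro i j k l p q
  simp only [h _ _ _ _ _ _, f.injective.eq_iff]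

lemma comp_equiv (h : IsMatMulDecomp a b c) (e : ι' ≃ ι) :
    IsMatMulDecomp (fun t => a (e t)) (fun t => b (e t)) (fun t => c (e t)) := by
  intro i j k l p q
  rw [← h]
  exact e.sum_comp fun t => a t i j * b t k l * c t p q

lemma hasMatMulDecomp {n : ℕ} {a b c : ι → Fin n → Fin n → S} (h : IsMatMulDecomp a b c) :
    HasMatMulDecomp S n (Fintype.card ι) :=
  ⟨_, _, _, h.comp_equiv (Fintype.equivFin ι).symm⟩

lemma kronecker {a' b' c' : ι' → κ' → κ' → S} (h : IsMatMulDecomp a b c)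
    (h' : IsMatMulDecomp a' b' c') :
    IsMatMulDecomp (fun (t : ι × ι') (i j : κ × κ') => a t.1 i.1 j.1 * a' t.2 i.2 j.2)
      (fun t i j => b t.1 i.1 j.1 * b' t.2 i.2 j.2)
      (fun t i j => c t.1 i.1 j.1 * c' t.2 i.2 j.2) := by
  intro i j k l p q
  have hsplit : ∀ (t : ι) (t' : ι'),
      a t i.1 j.1 * a' t' i.2 j.2 * (b t k.1 l.1 * b' t' k.2 l.2) * (c t p.1 q.1 * c' t' p.2 q.2) =
        a t i.1 j.1 * b t k.1 l.1 * c t p.1 q.1 * (a' t' i.2 j.2 * b' t' k.2 l.2 * c' t' p.2 q.2) :=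
    fun _ _ => by ring
  rw [Fintype.sum_prod_type]
  simp only [hsplit, ← Finset.sum_mul_sum, h _ _ _ _ _ _, h' _ _ _ _ _ _, Prod.ext_iff]
  split_ifs <;> simp_all

end IsMatMulDecomp

lemma isMatMulDecomp_standard (κ : Type*) [Fintype κ] [DecidableEq κ] :
    IsMatMulDecomp (S := S) (fun (t : κ × κ × κ) i j => if i = t.1 ∧ j = t.2.1 then 1 else 0)
      (fun t k l => if k = t.2.1 ∧ l = t.2.2 then 1 else 0)
      (fun t p q => if p = t.1 ∧ q = t.2.2 then 1 else 0) := by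
  intro i j k l p q
  by_cases j = k <;> by_cases i = p <;> by_cases l = q <;> simp [*, Fintype.sum_prod_type, ite_and]

namespace HasMatMulDecomp

variable {n m r r' : ℕ}

lemma cube (n : ℕ) : HasMatMulDecomp S n (n ^ 3) := by
  simpa [pow_succ, mul_assoc] using (isMatMulDecomp_standard (S := S) (Fin n)).hasMatMulDecomp

lemma pos [Nontrivial S] (h : HasMatMulDecomp S n r) (hn : 0 < n) : 0 < r := by
  obtain ⟨a, b, c, h⟩ := h
  rcases Nat.eq_zero_or_pos r with rfl | hr
  · simpa using h ⟨0, hn⟩ ⟨0, hn⟩ ⟨0, hn⟩ ⟨0, hn⟩ ⟨0, hn⟩ ⟨0, hn⟩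
  · exact hr

lemma of_le (h : HasMatMulDecomp S m r) (hnm : n ≤ m) : HasMatMulDecomp S n r := by
  obtain ⟨a, b, c, h⟩ := h
  exact ⟨_, _, _, h.comp_embedding (Fin.castLEEmb hnm)⟩

lemma mul (h : HasMatMulDecomp S n r) (h' : HasMatMulDecomp S m r') :
    HasMatMulDecomp S (n * m) (r * r') := by
  obtain ⟨a, b, c, h⟩ := h
  obtain ⟨a', b', c', h'⟩ := h'
  simpa using ((h.kronecker h').comp_embedding finProdFinEquiv.symm.toEmbedding).hasMatMulDecomp

lemma pow (h : HasMatMulDecomp S n r) (s : ℕ) : HasMatMulDecomp S (n ^ s) (r ^ s) := by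
  induction s with
  | zero => simpa using cube (S := S) 1
  | succ s ih => simpa [pow_succ] using ih.mul h

lemma map {T : Type*} [CommSemiring T] (h : HasMatMulDecomp S n r) (φ : S →+* T) :
    HasMatMulDecomp T n r := by
  obtain ⟨a, b, c, h⟩ := h
  refine ⟨fun t i j => φ (a t i j), fun t i j => φ (b t i j), fun t i j => φ (c t i j), ?_⟩
  intro i j k l p q
  simp only [← map_mul, ← map_sum, h i j k l p q]
  split_ifs <;> simp

lemma restrictScalars {K L : Type*} [CommSemiring K] [CommSemiring L] [Algebra K L]
    (h : HasMatMulDecomp L n r) {ι₀ : Type*} [Fintype ι₀] (e : Module.Basis ι₀ K L)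
    (π : L →ₗ[K] K) (hπ : π 1 = 1) : HasMatMulDecomp K n (r * Fintype.card ι₀ ^ 2) := by
  obtain ⟨a, b, c, h⟩ := h
  have hd : IsMatMulDecomp (fun (t : Fin r × ι₀ × ι₀) i j => e.repr (a t.1 i j) t.2.1)
      (fun t k l => e.repr (b t.1 k l) t.2.2)
      (fun t p q => π (e t.2.1 * e t.2.2 * c t.1 p q)) := by
    intro i j k l p q
    have hπδ : π (if j = k ∧ i = p ∧ l = q then 1 else 0) =
        if j = k ∧ i = p ∧ l = q then 1 else 0 := by
      split_ifs <;> simp [hπ]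
    -- expand the `L`-coefficients of `a` and `b` in the basis `e`, then apply `π`
    rw [← hπδ, ← h i j k l p q, map_sum, Fintype.sum_prod_type]
    refine Finset.sum_congr rfl fun t _ => ?_
    conv_rhs => rw [← e.sum_repr (a t i j), ← e.sum_repr (b t k l)]
    simp only [Finset.sum_mul, Finset.mul_sum, Fintype.sum_prod_type, smul_mul_assoc,
      mul_smul_comm, map_sum, map_smul, smul_eq_mul, mul_assoc]
    rw [Finset.sum_comm]
    exact Finset.sum_congr rfl fun _ _ => Finset.sum_congr rfl fun _ _ => by ring
  simpa [pow_two, mul_assoc] using hd.hasMatMulDecomp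

end HasMatMulDecomp

lemma IsMatMulDecomp.hasMatMulDecomp_of_forall_mem {K R : Type*} [CommSemiring K]
    [CommSemiring R] [Algebra K R] {n r : ℕ} {a b c : Fin r → Fin n → Fin n → R}
    (h : IsMatMulDecomp a b c) (B : Subalgebra K R) (ha : ∀ t i j, a t i j ∈ B)
    (hb : ∀ t i j, b t i j ∈ B) (hc : ∀ t i j, c t i j ∈ B) : HasMatMulDecomp B n r := by
  refine ⟨fun t i j => ⟨a t i j, ha t i j⟩, fun t i j => ⟨b t i j, hb t i j⟩,
    fun t i j => ⟨c t i j, hc t i j⟩, fun i j k l p q => Subtype.val_injective ?_⟩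
  simpa [apply_ite Subtype.val] using h i j k l p q

lemma HasMatMulDecomp.exists_fg_subalgebra {K R : Type*} [CommSemiring K] [CommSemiring R]
    [Algebra K R] {n r : ℕ} (h : HasMatMulDecomp R n r) :
    ∃ B : Subalgebra K R, B.FG ∧ HasMatMulDecomp B n r := by
  classical
  obtain ⟨a, b, c, h⟩ := h
  let coeffs : Finset R :=
    Finset.univ.image (fun x : Fin r × Fin n × Fin n => a x.1 x.2.1 x.2.2) ∪
      Finset.univ.image (fun x : Fin r × Fin n × Fin n => b x.1 x.2.1 x.2.2) ∪
      Finset.univ.image (fun x : Fin r × Fin n × Fin n => c x.1 x.2.1 x.2.2)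
  refine ⟨_, Subalgebra.fg_adjoin_finset coeffs,
    h.hasMatMulDecomp_of_forall_mem (Algebra.adjoin K _) ?_ ?_ ?_⟩ <;>
    exact fun t i j => Algebra.subset_adjoin (by simp [coeffs])

end Decomposition

lemma exists_ringHom_finiteDimensional_field (K : Type*) (A : Type v) [Field K] [CommRing A]
    [Nontrivial A] [Algebra K A] [Algebra.FiniteType K A] :
    ∃ (L : Type v) (_ : Field L) (_ : Algebra K L),
      FiniteDimensional K L ∧ Nonempty (A →+* L) := by
  obtain ⟨m, hm⟩ := Ideal.exists_maximal A
  let := Ideal.Quotient.field m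
  exact ⟨A ⧸ m, _, _, finite_of_finite_type_of_isJacobsonRing K (A ⧸ m),
    ⟨Ideal.Quotient.mk m⟩⟩

lemma exists_linearMap_map_one_eq_one (K L : Type*) [Field K] [Ring L] [Nontrivial L]
    [Algebra K L] : ∃ π : L →ₗ[K] K, π 1 = 1 := by
  obtain ⟨π, hπ⟩ := (Algebra.linearMap K L).exists_leftInverse_of_injective
    (LinearMap.ker_eq_bot.mpr (algebraMap K L).injective)
  exact ⟨π, by simpa using LinearMap.congr_fun hπ 1⟩

section Rank

variable {S T : Type*} [CommSemiring S] [CommSemiring T]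

lemma mmRank_le {n r : ℕ} (h : HasMatMulDecomp S n r) : mmRank S n ≤ r := by
  rw [mmRank_eq_sInf]
  exact Nat.sInf_le h

variable (S) in
lemma hasMatMulDecomp_mmRank (n : ℕ) : HasMatMulDecomp S n (mmRank S n) := by
  rw [mmRank_eq_sInf]
  exact Nat.sInf_mem (⟨n ^ 3, HasMatMulDecomp.cube n⟩ : {r | HasMatMulDecomp S n r}.Nonempty)

variable (S) in
lemma mmRank_le_cube (n : ℕ) : mmRank S n ≤ n ^ 3 :=
  mmRank_le (HasMatMulDecomp.cube n)

variable (S) in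
lemma mmRank_pos [Nontrivial S] {n : ℕ} (hn : 0 < n) : 0 < mmRank S n :=
  (hasMatMulDecomp_mmRank S n).pos hn

variable (S) in
lemma mmRank_mono : Monotone (mmRank S) :=
  fun _ _ hnm => mmRank_le ((hasMatMulDecomp_mmRank S _).of_le hnm)

lemma mmRank_le_of_ringHom (φ : S →+* T) (n : ℕ) : mmRank T n ≤ mmRank S n :=
  mmRank_le ((hasMatMulDecomp_mmRank S n).map φ)

lemma mmRank_pow_le_of_algebra (k R : Type*) [Field k] [CommRing R] [Algebra k R] [Nontrivial R]
    (n : ℕ) : ∃ D : ℕ, 0 < D ∧ ∀ s, mmRank k (n ^ s) ≤ D * mmRank R n ^ s := by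
  obtain ⟨B, hB, hdec⟩ := (hasMatMulDecomp_mmRank R n).exists_fg_subalgebra (K := k)
  have := (Subalgebra.fg_iff_finiteType B).mp hB
  obtain ⟨L, _, _, _, ⟨φ⟩⟩ := exists_ringHom_finiteDimensional_field k B
  obtain ⟨π, hπ⟩ := exists_linearMap_map_one_eq_one k L
  refine ⟨Module.finrank k L ^ 2, pow_pos Module.finrank_pos 2, fun s => mmRank_le ?_⟩
  simpa [mul_comm] using ((hdec.map φ).pow s).restrictScalars (Module.finBasis k L) π hπ

end Rank

section Exponent

open Filter

variable {S T : Type*} [CommSemiring S] [CommSemiring T]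

variable (S) in
def mmExponentSet : Set ℝ :=
  {τ | ∃ C : ℝ, 0 < C ∧ ∀ n : ℕ, 1 ≤ n → (mmRank S n : ℝ) ≤ C * (n : ℝ) ^ τ}

lemma mmExponent_eq_sInf : mmExponent S = sInf (mmExponentSet S) := rfl

lemma three_mem_mmExponentSet : (3 : ℝ) ∈ mmExponentSet S :=
  ⟨1, one_pos, fun n _ => by
    rw [one_mul, Real.rpow_ofNat]
    exact_mod_cast mmRank_le_cube S n⟩

lemma mmExponentSet_subset_Ici [Nontrivial S] : mmExponentSet S ⊆ Set.Ici 0 := by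
  rintro τ ⟨C, -, hbound⟩
  rw [Set.mem_Ici]
  by_contra! hτ
  have hlim : Tendsto (fun n : ℕ => C * (n : ℝ) ^ τ) atTop (nhds 0) := by
    simpa using ((tendsto_rpow_neg_atTop (neg_pos.2 hτ)).comp
      tendsto_natCast_atTop_atTop).const_mul C
  obtain ⟨N, hN, hN1⟩ :=
    ((hlim.eventually (gt_mem_nhds one_pos)).and (eventually_ge_atTop 1)).exists
  have hpos : (1 : ℝ) ≤ mmRank S N := by exact_mod_cast mmRank_pos S hN1
  linarith [hbound N hN1]

lemma bddBelow_mmExponentSet [Nontrivial S] : BddBelow (mmExponentSet S) :=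
  ⟨0, mmExponentSet_subset_Ici⟩

lemma mmExponentSet_mono (h : ∀ n, mmRank T n ≤ mmRank S n) :
    mmExponentSet S ⊆ mmExponentSet T := by
  rintro τ ⟨C, hC, hbound⟩
  exact ⟨C, hC, fun n hn => le_trans (by exact_mod_cast h n) (hbound n hn)⟩

lemma exists_mmRank_le_rpow {τ ε : ℝ} (hτ : τ ∈ mmExponentSet S) (hε : 0 < ε) :
    ∃ N : ℕ, 2 ≤ N ∧ (mmRank S N : ℝ) ≤ (N : ℝ) ^ (τ + ε) := by
  obtain ⟨C, -, hbound⟩ := hτ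
  have hlim : Tendsto (fun n : ℕ => (n : ℝ) ^ ε) atTop atTop :=
    (tendsto_rpow_atTop hε).comp tendsto_natCast_atTop_atTop
  obtain ⟨N, hCN, hN⟩ := ((hlim.eventually_ge_atTop C).and (eventually_ge_atTop 2)).exists
  refine ⟨N, hN, ?_⟩
  calc (mmRank S N : ℝ) ≤ C * (N : ℝ) ^ τ := hbound N (by omega)
    _ ≤ (N : ℝ) ^ ε * (N : ℝ) ^ τ := by gcongr
    _ = (N : ℝ) ^ (τ + ε) := by rw [add_comm, Real.rpow_add (by positivity)]

lemma mem_mmExponentSet_of_pow_le {N : ℕ} (hN : 2 ≤ N) {σ D : ℝ} (hσ : 0 ≤ σ)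
    (hD : 0 < D) (h : ∀ s : ℕ, (mmRank S (N ^ s) : ℝ) ≤ D * ((N : ℝ) ^ σ) ^ s) :
    σ ∈ mmExponentSet S := by
  refine ⟨D * (N : ℝ) ^ σ, by positivity, fun M hM => ?_⟩
  -- interpolate `M` between consecutive powers of `N`
  set s := Nat.log N M
  have hM_le : M ≤ N ^ (s + 1) := (Nat.lt_pow_succ_log_self (by omega) M).le
  have hpow_le : N ^ s ≤ M := Nat.pow_log_le_self N (by omega)
  calc (mmRank S M : ℝ) ≤ mmRank S (N ^ (s + 1)) := by exact_mod_cast mmRank_mono S hM_le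
    _ ≤ D * ((N : ℝ) ^ σ) ^ (s + 1) := h _
    _ = D * (N : ℝ) ^ σ * ((N : ℝ) ^ s) ^ σ := by
      rw [pow_succ, Real.rpow_pow_comm (by positivity)]
      ring
    _ ≤ D * (N : ℝ) ^ σ * (M : ℝ) ^ σ := by gcongr; exact_mod_cast hpow_le

lemma add_mem_mmExponentSet_of_algebra (k R : Type*) [Field k] [CommRing R] [Algebra k R]
    [Nontrivial R] {τ ε : ℝ} (hτ : τ ∈ mmExponentSet R) (hε : 0 < ε) :
    τ + ε ∈ mmExponentSet k := by
  obtain ⟨N, hN, hNR⟩ := exists_mmRank_le_rpow hτ hε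
  obtain ⟨D, hD, hDk⟩ := mmRank_pow_le_of_algebra k R N
  have hτ0 : 0 ≤ τ := mmExponentSet_subset_Ici hτ
  refine mem_mmExponentSet_of_pow_le hN (by linarith) (Nat.cast_pos.2 hD) fun s => ?_
  calc (mmRank k (N ^ s) : ℝ) ≤ D * (mmRank R N : ℝ) ^ s := by exact_mod_cast hDk s
    _ ≤ D * ((N : ℝ) ^ (τ + ε)) ^ s := by gcongr

end Exponent

theorem mmExponent_algebra_eq (k : Type u) [Field k] (R : Type v) [CommRing R]
    [Algebra k R] [Nontrivial R] :
    mmExponent R = mmExponent k := by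
  refine le_antisymm ?_ ?_
  · exact csInf_le_csInf bddBelow_mmExponentSet ⟨3, three_mem_mmExponentSet⟩
      (mmExponentSet_mono (mmRank_le_of_ringHom (algebraMap k R)))
  · refine le_csInf ⟨3, three_mem_mmExponentSet⟩ fun τ hτ =>
      le_of_forall_pos_le_add fun ε hε => ?_
    exact csInf_le bddBelow_mmExponentSet (add_mem_mmExponentSet_of_algebra k R hτ hε)
end
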